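/- arXiv:1610.03719 — 3 statements merged into one kernel-verified Lean document; each statement's English description precedes it below -/
import Mathlib

section
/- Let p ≥ 1, let g : ℝ → ℝ be twice continuously differentiable with bounded first and second derivatives, and let a, a' : [0,T] → ℝ be continuous paths of finite p-variation. Then ‖g(a) − g(a')‖_{p-var} ≤ ‖Dg‖_∞ ‖a − a'‖_{p-var} + ‖D²g‖_∞ (‖a‖_{p-var} + ‖a'‖_{p-var}) ‖a − a'‖_∞. -/
open Finset Set

/-- The set of partition sums `(∑ |X_{t_{i+1}} - X_{t_i}|^p)^(1/p)` over partitions of `[s, T]`. -/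
def pVarSet (p s T : ℝ) (X : ℝ → ℝ) : Set ℝ :=
  { v | ∃ (n : ℕ) (t : ℕ → ℝ), Monotone t ∧ t 0 = s ∧ (∀ i ≥ n, t i = T) ∧
      v = (∑ i ∈ Finset.range n, |X (t (i + 1)) - X (t i)| ^ p) ^ (1 / p) }

/-- The `p`-variation of `X` on `[s, T]`. -/
noncomputable def pVar (p s T : ℝ) (X : ℝ → ℝ) : ℝ := sSup (pVarSet p s T X)

/-- `X` has finite `p`-variation on `[s, T]`. -/
def HasFinitePVar (p s T : ℝ) (X : ℝ → ℝ) : Prop := BddAbove (pVarSet p s T X)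

/-- Supremum norm of `X` on `[s, T]`. -/
noncomputable def supNorm (s T : ℝ) (X : ℝ → ℝ) : ℝ :=
  sSup ((fun t => |X t|) '' Set.Icc s T)

/-- `I` is the Young integral `∫_s^T X dY`: the limit of left-point Riemann–Stieltjes sums
over partitions of `[s, T]` as the mesh tends to `0`. -/
def IsYoungIntegral (s T : ℝ) (X Y : ℝ → ℝ) (I : ℝ) : Prop :=
  ∀ ε > 0, ∃ δ > 0, ∀ (n : ℕ) (t : ℕ → ℝ), Monotone t → t 0 = s → (∀ i ≥ n, t i = T) →
    (∀ i < n, t (i + 1) - t i < δ) →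
    |(∑ i ∈ Finset.range n, X (t i) * (Y (t (i + 1)) - Y (t i))) - I| < ε

/-- Lipschitz estimate for the derivative of a `C²` function with bounded second derivative. -/
lemma deriv_lip_aux (g : ℝ → ℝ) (hg : ContDiff ℝ 2 g) (D2g : ℝ)
    (hD2g : ∀ x, |deriv (deriv g) x| ≤ D2g) (x y : ℝ) :
    |deriv g x - deriv g y| ≤ D2g * |x - y| := by
  have h2 : ContDiff ℝ (1+1) g := by norm_num [hg]
  have hd : Differentiable ℝ (deriv g) :=
    (contDiff_succ_iff_deriv.mp h2).2.2.differentiable one_ne_zero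
  have := Convex.norm_image_sub_le_of_norm_deriv_le
    (f := deriv g) (s := Set.univ) (fun z _ => hd z)
    (fun z _ => by simpa [Real.norm_eq_abs] using hD2g z)
    convex_univ (Set.mem_univ y) (Set.mem_univ x)
  simpa [Real.norm_eq_abs] using this

/-- Key pointwise estimate. -/
lemma key_pointwise_aux (g : ℝ → ℝ) (hg : ContDiff ℝ 2 g) (Dg D2g M : ℝ)
    (hDg : ∀ x, |deriv g x| ≤ Dg) (hD2g0 : 0 ≤ D2g)
    (hlip : ∀ x y, |deriv g x - deriv g y| ≤ D2g * |x - y|)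
    (a b a' b' : ℝ) (haM : |a - a'| ≤ M) (hbM : |b - b'| ≤ M) :
    |(g b - g b') - (g a - g a')| ≤ Dg * |(b - b') - (a - a')| + D2g * M * |b' - a'| := by
  have hgd : Differentiable ℝ g := hg.differentiable (by norm_num)
  set h : ℝ → ℝ := fun θ => g (a + θ * (b - a)) - g (a' + θ * (b' - a')) with hh
  set h' : ℝ → ℝ := fun θ =>
    deriv g (a + θ * (b - a)) * (b - a) - deriv g (a' + θ * (b' - a')) * (b' - a') with hh'
  have hM0 : 0 ≤ M := le_trans (abs_nonneg _) haM
  have hderiv : ∀ θ ∈ Icc (0:ℝ) 1, HasDerivWithinAt h (h' θ) (Icc (0:ℝ) 1) θ := by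
    intro θ _
    have d1 : HasDerivAt (fun θ : ℝ => a + θ * (b - a)) (b - a) θ := by
      simpa using ((hasDerivAt_id θ).mul_const (b - a)).const_add a
    have d2 : HasDerivAt (fun θ : ℝ => a' + θ * (b' - a')) (b' - a') θ := by
      simpa using ((hasDerivAt_id θ).mul_const (b' - a')).const_add a'
    exact (((hgd _).hasDerivAt.comp θ d1).sub ((hgd _).hasDerivAt.comp θ d2)).hasDerivWithinAt
  have hbound : ∀ θ ∈ Ico (0:ℝ) 1, ‖h' θ‖ ≤ Dg * |(b - b') - (a - a')| + D2g * M * |b' - a'| := by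
    intro θ hθ
    have hθ0 : (0:ℝ) ≤ θ := hθ.1
    have hθ1 : θ ≤ 1 := hθ.2.le
    set ξ := a + θ * (b - a)
    set η := a' + θ * (b' - a')
    have hrw : h' θ = deriv g ξ * ((b - b') - (a - a')) + (deriv g ξ - deriv g η) * (b' - a') := by
      simp only [hh']
      ring
    have hξη : |ξ - η| ≤ M := by
      have : ξ - η = (1 - θ) * (a - a') + θ * (b - b') := by simp only [ξ, η]; ring
      rw [this]
      calc |(1 - θ) * (a - a') + θ * (b - b')|
          ≤ |(1 - θ) * (a - a')| + |θ * (b - b')| := abs_add_le _ _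
        _ = (1 - θ) * |a - a'| + θ * |b - b'| := by
            rw [abs_mul, abs_mul, abs_of_nonneg (by linarith), abs_of_nonneg hθ0]
        _ ≤ (1 - θ) * M + θ * M := by gcongr <;> linarith
        _ = M := by ring
    rw [Real.norm_eq_abs, hrw]
    calc |deriv g ξ * ((b - b') - (a - a')) + (deriv g ξ - deriv g η) * (b' - a')|
        ≤ |deriv g ξ| * |(b - b') - (a - a')| + |deriv g ξ - deriv g η| * |b' - a'| := by
          refine (abs_add_le _ _).trans ?_
          rw [abs_mul, abs_mul]
      _ ≤ Dg * |(b - b') - (a - a')| + (D2g * M) * |b' - a'| := by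
          gcongr
          · exact hDg ξ
          · exact (hlip ξ η).trans (mul_le_mul_of_nonneg_left hξη hD2g0)
  have := norm_image_sub_le_of_norm_deriv_le_segment_01' hderiv hbound
  simpa [hh, Real.norm_eq_abs] using this

/-- Minkowski-type estimate for `ℓ^p` partition sums. -/
lemma lp_bound_aux {p : ℝ} (hp : 1 ≤ p) (n : ℕ) (u v w : ℕ → ℝ) (hu : ∀ i, 0 ≤ u i)
    (hv : ∀ i, 0 ≤ v i) (hw : ∀ i, 0 ≤ w i) (c1 c2 : ℝ) (hc1 : 0 ≤ c1) (hc2 : 0 ≤ c2)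
    (hb : ∀ i < n, u i ≤ c1 * v i + c2 * w i) :
    (∑ i ∈ range n, u i ^ p) ^ (1/p) ≤
      c1 * (∑ i ∈ range n, v i ^ p) ^ (1/p) + c2 * (∑ i ∈ range n, w i ^ p) ^ (1/p) := by
  have hp0 : 0 < p := lt_of_lt_of_le one_pos hp
  have key : ∀ (c : ℝ), 0 ≤ c → ∀ (x : ℕ → ℝ), (∀ i, 0 ≤ x i) →
      (∑ i ∈ range n, (c * x i) ^ p) ^ (1/p) = c * (∑ i ∈ range n, x i ^ p) ^ (1/p) := by
    intro c hc x hx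
    have : ∀ i, (c * x i) ^ p = c ^ p * x i ^ p := fun i => Real.mul_rpow hc (hx i)
    simp_rw [this, ← Finset.mul_sum]
    rw [Real.mul_rpow (Real.rpow_nonneg hc p)
      (Finset.sum_nonneg fun i _ => Real.rpow_nonneg (hx i) p),
      ← Real.rpow_mul hc, mul_one_div_cancel hp0.ne', Real.rpow_one]
  have step1 : (∑ i ∈ range n, u i ^ p) ^ (1/p) ≤
      (∑ i ∈ range n, |c1 * v i + c2 * w i| ^ p) ^ (1/p) := by
    apply Real.rpow_le_rpow (Finset.sum_nonneg fun i _ => Real.rpow_nonneg (hu i) p)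
      (Finset.sum_le_sum fun i hi => Real.rpow_le_rpow (hu i)
        ((hb i (Finset.mem_range.mp hi)).trans (le_abs_self _)) hp0.le)
      (by positivity)
  have step2 := Real.Lp_add_le (range n) (fun i => c1 * v i) (fun i => c2 * w i) hp
  calc (∑ i ∈ range n, u i ^ p) ^ (1/p)
      ≤ (∑ i ∈ range n, |c1 * v i + c2 * w i| ^ p) ^ (1/p) := step1
    _ ≤ (∑ i ∈ range n, |c1 * v i| ^ p) ^ (1/p) + (∑ i ∈ range n, |c2 * w i| ^ p) ^ (1/p) := step2
    _ = c1 * (∑ i ∈ range n, v i ^ p) ^ (1/p) + c2 * (∑ i ∈ range n, w i ^ p) ^ (1/p) := by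
        have e1 : ∀ i, |c1 * v i| = c1 * v i := fun i => abs_of_nonneg (mul_nonneg hc1 (hv i))
        have e2 : ∀ i, |c2 * w i| = c2 * w i := fun i => abs_of_nonneg (mul_nonneg hc2 (hw i))
        simp_rw [e1, e2]
        rw [key c1 hc1 v hv, key c2 hc2 w hw]

lemma mem_pVarSet_aux {p T : ℝ} {X : ℝ → ℝ} {n : ℕ} {t : ℕ → ℝ}
    (ht : Monotone t) (h0 : t 0 = 0) (hend : ∀ i ≥ n, t i = T) :
    (∑ i ∈ range n, |X (t (i + 1)) - X (t i)| ^ p) ^ (1/p) ∈ pVarSet p 0 T X :=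
  ⟨n, t, ht, h0, hend, rfl⟩

lemma pVarSet_nonempty_aux {p T : ℝ} (hT : 0 < T) (X : ℝ → ℝ) :
    (pVarSet p 0 T X).Nonempty := by
  refine ⟨_, 1, fun i => if i = 0 then 0 else T, ?_, if_pos rfl, fun i hi => if_neg (by omega), rfl⟩
  intro i j hij
  by_cases hi : i = 0
  · subst hi
    by_cases hj : j = 0 <;> simp [hj, hT.le]
  · have hj : j ≠ 0 := by omega
    simp [hi, hj]

lemma pVarSet_nonneg_aux {p T : ℝ} {X : ℝ → ℝ} {v : ℝ} (hv : v ∈ pVarSet p 0 T X) : 0 ≤ v := by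
  obtain ⟨n, t, -, -, -, rfl⟩ := hv
  positivity

/-- `p`-variation estimate for differences of compositions with a `C²_b` function. -/
theorem pVar_comp_sub_comp_le (T : ℝ) (hT : 0 < T) (p : ℝ) (hp : 1 ≤ p)
    (g : ℝ → ℝ) (hg : ContDiff ℝ 2 g) (Dg D2g : ℝ)
    (hDg : ∀ x, |deriv g x| ≤ Dg) (hD2g : ∀ x, |deriv (deriv g) x| ≤ D2g)
    (a a' : ℝ → ℝ)
    (ha : ContinuousOn a (Set.Icc 0 T)) (ha' : ContinuousOn a' (Set.Icc 0 T))
    (hfa : HasFinitePVar p 0 T a) (hfa' : HasFinitePVar p 0 T a') :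
    pVar p 0 T (fun t => g (a t) - g (a' t)) ≤
      Dg * pVar p 0 T (fun t => a t - a' t) +
        D2g * (pVar p 0 T a + pVar p 0 T a') * supNorm 0 T (fun t => a t - a' t) := by
  have hDg0 : 0 ≤ Dg := (abs_nonneg _).trans (hDg 0)
  have hD2g0 : 0 ≤ D2g := (abs_nonneg _).trans (hD2g 0)
  set M := supNorm 0 T (fun t => a t - a' t) with hMdef
  have hMbdd : BddAbove ((fun t => |a t - a' t|) '' Set.Icc 0 T) :=
    (isCompact_Icc.image_of_continuousOn ((ha.sub ha').abs)).bddAbove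
  have hM : ∀ s ∈ Set.Icc 0 T, |a s - a' s| ≤ M := fun s hs => le_csSup hMbdd ⟨s, hs, rfl⟩
  have hM0 : 0 ≤ M := (abs_nonneg _).trans (hM 0 ⟨le_refl 0, hT.le⟩)
  have hlip : ∀ x y, |deriv g x - deriv g y| ≤ D2g * |x - y| := deriv_lip_aux g hg D2g hD2g
  -- nonnegativity of p-variations
  have hpos : ∀ X : ℝ → ℝ, HasFinitePVar p 0 T X → 0 ≤ pVar p 0 T X := by
    intro X hX
    obtain ⟨v, hv⟩ := pVarSet_nonempty_aux hT X
    exact (pVarSet_nonneg_aux hv).trans (le_csSup hX hv)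
  -- finite p-variation of the difference
  have hbdd_sub : HasFinitePVar p 0 T (fun t => a t - a' t) := by
    refine ⟨pVar p 0 T a + pVar p 0 T a', ?_⟩
    rintro v ⟨n, t, ht, h0, hend, rfl⟩
    have hb := lp_bound_aux hp n
      (fun i => |(a (t (i+1)) - a' (t (i+1))) - (a (t i) - a' (t i))|)
      (fun i => |a (t (i+1)) - a (t i)|) (fun i => |a' (t (i+1)) - a' (t i)|)
      (fun i => abs_nonneg _) (fun i => abs_nonneg _) (fun i => abs_nonneg _)
      1 1 zero_le_one zero_le_one
      (fun i _ => by
        rw [one_mul, one_mul]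
        have e : (a (t (i+1)) - a' (t (i+1))) - (a (t i) - a' (t i)) =
            (a (t (i+1)) - a (t i)) - (a' (t (i+1)) - a' (t i)) := by ring
        rw [e]
        exact abs_sub _ _)
    simp only [one_mul] at hb
    refine hb.trans (add_le_add ?_ ?_)
    · exact le_csSup hfa (mem_pVarSet_aux ht h0 hend)
    · exact le_csSup hfa' (mem_pVarSet_aux ht h0 hend)
  -- main estimate
  apply csSup_le (pVarSet_nonempty_aux hT _)
  rintro v ⟨n, t, ht, h0, hend, rfl⟩
  have hmem : ∀ i, i ≤ n → t i ∈ Set.Icc 0 T := by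
    intro i hi
    exact ⟨h0 ▸ ht (Nat.zero_le i), (hend n le_rfl) ▸ ht hi⟩
  have hb := lp_bound_aux hp n
    (fun i => |(g (a (t (i+1))) - g (a' (t (i+1)))) - (g (a (t i)) - g (a' (t i)))|)
    (fun i => |(a (t (i+1)) - a' (t (i+1))) - (a (t i) - a' (t i))|)
    (fun i => |a' (t (i+1)) - a' (t i)|)
    (fun i => abs_nonneg _) (fun i => abs_nonneg _) (fun i => abs_nonneg _)
    Dg (D2g * M) hDg0 (mul_nonneg hD2g0 hM0)
    (fun i hi => by
      have h1 : |a (t i) - a' (t i)| ≤ M := hM _ (hmem i (Nat.le_of_lt hi))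
      have h2 : |a (t (i+1)) - a' (t (i+1))| ≤ M := hM _ (hmem (i+1) hi)
      have := key_pointwise_aux g hg Dg D2g M hDg hD2g0 hlip
        (a (t i)) (a (t (i+1))) (a' (t i)) (a' (t (i+1))) h1 h2
      convert this using 3 <;> ring)
  refine hb.trans ?_
  have e1 : (∑ i ∈ range n, |(a (t (i+1)) - a' (t (i+1))) - (a (t i) - a' (t i))| ^ p) ^ (1/p) ≤
      pVar p 0 T (fun t => a t - a' t) :=
    le_csSup hbdd_sub (mem_pVarSet_aux (X := fun t => a t - a' t) ht h0 hend)
  have e2 : (∑ i ∈ range n, |a' (t (i+1)) - a' (t i)| ^ p) ^ (1/p) ≤ pVar p 0 T a' :=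
    le_csSup hfa' (mem_pVarSet_aux ht h0 hend)
  have ha0 : 0 ≤ pVar p 0 T a := hpos a hfa
  have ha'0 : 0 ≤ pVar p 0 T a' := hpos a' hfa'
  have hS0 : 0 ≤ (∑ i ∈ range n, |a' (t (i+1)) - a' (t i)| ^ p) ^ (1/p) := by positivity
  beta_reduce
  nlinarith [mul_le_mul_of_nonneg_left e1 hDg0,
    mul_le_mul_of_nonneg_left e2 (mul_nonneg hD2g0 hM0),
    mul_nonneg (mul_nonneg hD2g0 hM0) ha0]
end

section
/- Let p, q ≥ 1 with 1/p + 1/q > 1, X : [0,T] → ℝ continuous of finite p-variation and Y : [0,T] → ℝ continuous of finite q-variation. Then the Riemann–Stieltjes sums ∑_{[u,v]∈π} X_u (Y_v − Y_u) converge as the mesh of the partition π tends to 0; the limit defines the Young integral ∫_0^T X_s dY_s. -/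
open Finset Set

namespace Young

def IsPart (a b : ℝ) (n : ℕ) (t : ℕ → ℝ) : Prop :=
  Monotone t ∧ t 0 = a ∧ ∀ i ≥ n, t i = b

noncomputable def vsum (p : ℝ) (X : ℝ → ℝ) (n : ℕ) (t : ℕ → ℝ) : ℝ :=
  ∑ i ∈ Finset.range n, |X (t (i + 1)) - X (t i)| ^ p

def vset (p a b : ℝ) (X : ℝ → ℝ) : Set ℝ :=
  { v | ∃ n t, IsPart a b n t ∧ v = vsum p X n t }

noncomputable def ctrl (p a b : ℝ) (X : ℝ → ℝ) : ℝ := sSup (vset p a b X)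

noncomputable def rs (X Y : ℝ → ℝ) (n : ℕ) (t : ℕ → ℝ) : ℝ :=
  ∑ i ∈ Finset.range n, X (t i) * (Y (t (i + 1)) - Y (t i))

lemma IsPart.left_le {a b : ℝ} {n : ℕ} {t : ℕ → ℝ} (h : IsPart a b n t) (i : ℕ) :
    a ≤ t i := h.2.1 ▸ h.1 (Nat.zero_le i)

lemma IsPart.le_right {a b : ℝ} {n : ℕ} {t : ℕ → ℝ} (h : IsPart a b n t) (i : ℕ) :
    t i ≤ b := by
  calc t i ≤ t (max i n) := h.1 (le_max_left _ _)
    _ = b := h.2.2 _ (le_max_right _ _)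

lemma IsPart.le {a b : ℝ} {n : ℕ} {t : ℕ → ℝ} (h : IsPart a b n t) : a ≤ b :=
  h.2.1 ▸ h.le_right 0

lemma vsum_nonneg (p : ℝ) (X : ℝ → ℝ) (n : ℕ) (t : ℕ → ℝ) : 0 ≤ vsum p X n t :=
  Finset.sum_nonneg fun _ _ => Real.rpow_nonneg (abs_nonneg _) _

lemma vsum_mem_vset (p a b : ℝ) (X : ℝ → ℝ) {n : ℕ} {t : ℕ → ℝ} (h : IsPart a b n t) :
    vsum p X n t ∈ vset p a b X := ⟨n, t, h, rfl⟩

lemma isPart_pair {a b : ℝ} (hab : a ≤ b) :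
    IsPart a b 1 (fun i => if i = 0 then a else b) := by
  refine ⟨monotone_nat_of_le_succ fun i => ?_, by simp, fun i hi => by
    have : i ≠ 0 := by omega
    simp [this]⟩
  rcases i with _ | i <;> simp [hab]

lemma vset_nonempty {a b : ℝ} (p : ℝ) (X : ℝ → ℝ) (hab : a ≤ b) :
    (vset p a b X).Nonempty := ⟨_, vsum_mem_vset p a b X (isPart_pair hab)⟩

lemma le_ctrl {p a b : ℝ} {X : ℝ → ℝ} (hb : BddAbove (vset p a b X)) {n : ℕ} {t : ℕ → ℝ}
    (h : IsPart a b n t) : vsum p X n t ≤ ctrl p a b X :=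
  le_csSup hb (vsum_mem_vset p a b X h)

lemma ctrl_nonneg {p a b : ℝ} {X : ℝ → ℝ} (hb : BddAbove (vset p a b X)) (hab : a ≤ b) :
    0 ≤ ctrl p a b X :=
  le_trans (vsum_nonneg _ _ _ _) (le_ctrl hb (isPart_pair hab))

lemma abs_rpow_le_ctrl {p a b u v : ℝ} {X : ℝ → ℝ} (hb : BddAbove (vset p a b X))
    (hau : a ≤ u) (huv : u ≤ v) (hvb : v ≤ b) :
    |X v - X u| ^ p ≤ ctrl p a b X := by
  set t : ℕ → ℝ := fun i => if i = 0 then a else if i = 1 then u else if i = 2 then v else b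
    with ht
  have hpart : IsPart a b 3 t := by
    refine ⟨monotone_nat_of_le_succ fun i => ?_, by simp [ht], fun i hi => ?_⟩
    · rcases i with _ | _ | _ | i <;> simp [ht, hau, huv, hvb]
    · have h0 : i ≠ 0 := by omega
      have h1 : i ≠ 1 := by omega
      have h2 : i ≠ 2 := by omega
      simp [ht, h0, h1, h2]
  refine le_trans ?_ (le_ctrl hb hpart)
  have : vsum p X 3 t = |X u - X a| ^ p + |X v - X u| ^ p + |X b - X v| ^ p := by
    simp [vsum, Finset.sum_range_succ, ht]
  rw [this]
  have h1 : (0:ℝ) ≤ |X u - X a| ^ p := Real.rpow_nonneg (abs_nonneg _) _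
  have h2 : (0:ℝ) ≤ |X b - X v| ^ p := Real.rpow_nonneg (abs_nonneg _) _
  linarith


lemma vsum_ext {p a b a' b' : ℝ} {X : ℝ → ℝ} {n : ℕ} {t : ℕ → ℝ} (h : IsPart a b n t)
    (ha : a' ≤ a) (hb : b ≤ b') :
    ∃ n' t', IsPart a' b' n' t' ∧ vsum p X n t ≤ vsum p X n' t' := by
  set t' : ℕ → ℝ := fun i => if i = 0 then a' else if i ≤ n + 1 then t (i - 1) else b' with ht'
  have h1 : ∀ i, 1 ≤ i → i ≤ n + 1 → t' i = t (i - 1) := by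
    intro i hi1 hi2
    simp only [ht']; rw [if_neg (by omega), if_pos hi2]
  have hpart : IsPart a' b' (n + 2) t' := by
    refine ⟨monotone_nat_of_le_succ fun i => ?_, by simp [ht'], fun i hi => ?_⟩
    · rcases Nat.eq_or_lt_of_le (Nat.zero_le i) with h0 | h0
      · rw [← h0, h1 1 le_rfl (by omega)]
        simpa [ht', h.2.1] using ha
      · by_cases h2 : i + 1 ≤ n + 1
        · rw [h1 i h0 (by omega), h1 (i+1) (by omega) h2]
          exact h.1 (by omega)
        · by_cases h3 : i ≤ n + 1
          · rw [h1 i h0 h3]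
            simp only [ht']; rw [if_neg (by omega), if_neg (by omega)]
            exact le_trans (h.le_right _) hb
          · simp only [ht']; rw [if_neg (by omega), if_neg (by omega), if_neg (by omega),
              if_neg (by omega)]
    · simp only [ht']; rw [if_neg (by omega), if_neg (by omega)]
  refine ⟨n + 2, t', hpart, ?_⟩
  have hmid : ∑ i ∈ Finset.Ico 1 (n + 1), |X (t' (i + 1)) - X (t' i)| ^ p = vsum p X n t := by
    rw [Finset.sum_Ico_eq_sum_range]
    refine Finset.sum_congr (by congr 1 <;> omega) fun j hj => ?_
    rw [Finset.mem_range] at hj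
    rw [h1 (1 + j) (by omega) (by omega), h1 (1 + j + 1) (by omega) (by omega)]
    have e1 : 1 + j + 1 - 1 = j + 1 := by omega
    have e2 : 1 + j - 1 = j := by omega
    rw [e1, e2]
  have hsplit : vsum p X (n + 2) t' =
      |X (t' 1) - X (t' 0)| ^ p + (∑ i ∈ Finset.Ico 1 (n + 1), |X (t' (i + 1)) - X (t' i)| ^ p)
        + |X (t' (n + 2)) - X (t' (n + 1))| ^ p := by
    rw [vsum, Finset.range_eq_Ico,
      ← Finset.sum_Ico_consecutive _ (by omega : 0 ≤ n + 1) (by omega : n + 1 ≤ n + 2),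
      ← Finset.sum_Ico_consecutive _ (by omega : 0 ≤ 1) (by omega : 1 ≤ n + 1)]
    simp [Finset.sum_Ico_succ_top]
  rw [hsplit, hmid]
  have g1 : (0:ℝ) ≤ |X (t' 1) - X (t' 0)| ^ p := Real.rpow_nonneg (abs_nonneg _) _
  have g2 : (0:ℝ) ≤ |X (t' (n + 2)) - X (t' (n + 1))| ^ p := Real.rpow_nonneg (abs_nonneg _) _
  linarith

lemma bddAbove_vset_sub {p a b a' b' : ℝ} {X : ℝ → ℝ} (hbdd : BddAbove (vset p a' b' X))
    (ha : a' ≤ a) (hb : b ≤ b') : BddAbove (vset p a b X) := by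
  obtain ⟨C, hC⟩ := hbdd
  refine ⟨C, ?_⟩
  rintro v ⟨n, t, hpart, rfl⟩
  obtain ⟨n', t', h', hle⟩ := vsum_ext hpart ha hb
  exact le_trans hle (hC (vsum_mem_vset _ _ _ _ h'))

lemma ctrl_mono_interval {p a b a' b' : ℝ} {X : ℝ → ℝ} (hbdd : BddAbove (vset p a' b' X))
    (ha : a' ≤ a) (hab : a ≤ b) (hb : b ≤ b') : ctrl p a b X ≤ ctrl p a' b' X := by
  refine csSup_le (vset_nonempty p X hab) ?_
  rintro v ⟨n, t, hpart, rfl⟩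
  obtain ⟨n', t', h', hle⟩ := vsum_ext hpart ha hb
  exact le_trans hle (le_ctrl hbdd h')

lemma vsum_concat {p a b c : ℝ} {X : ℝ → ℝ} {n m : ℕ} {t u : ℕ → ℝ}
    (htp : IsPart a b n t) (hup : IsPart b c m u) :
    ∃ w, IsPart a c (n + m) w ∧ vsum p X (n + m) w = vsum p X n t + vsum p X m u := by
  set w : ℕ → ℝ := fun i => if i < n then t i else u (i - n) with hw
  have hwt : ∀ j, j ≤ n → w j = t j := by
    intro j hj
    by_cases h : j < n
    · simp [hw, h]
    · have hj' : j = n := by omega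
      rw [hj']
      simp only [hw, if_neg (lt_irrefl n), Nat.sub_self]
      rw [hup.2.1, htp.2.2 n le_rfl]
  have hwu : ∀ j, n ≤ j → w j = u (j - n) := by
    intro j hj
    simp only [hw, if_neg (by omega : ¬ j < n)]
  have hpart : IsPart a c (n + m) w := by
    refine ⟨monotone_nat_of_le_succ fun i => ?_, by rw [hwt 0 (Nat.zero_le n), htp.2.1],
      fun i hi => ?_⟩
    · by_cases h : i + 1 ≤ n
      · rw [hwt i (by omega), hwt (i+1) h]; exact htp.1 (by omega)
      · by_cases h2 : n ≤ i
        · rw [hwu i h2, hwu (i+1) (by omega)]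
          exact hup.1 (by omega)
        · rw [hwt i (by omega), hwu (i+1) (by omega)]
          have : i + 1 - n = 0 := by omega
          rw [this, hup.2.1]
          exact htp.le_right i
    · rw [hwu i (by omega)]
      exact hup.2.2 _ (by omega)
  refine ⟨w, hpart, ?_⟩
  have hsplit : vsum p X (n + m) w = (∑ i ∈ Finset.range n, |X (w (i + 1)) - X (w i)| ^ p)
      + ∑ i ∈ Finset.Ico n (n + m), |X (w (i + 1)) - X (w i)| ^ p := by
    rw [vsum, Finset.range_eq_Ico,
      ← Finset.sum_Ico_consecutive _ (Nat.zero_le n) (by omega : n ≤ n + m),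
      ← Finset.range_eq_Ico]
  rw [hsplit]
  congr 1
  · refine Finset.sum_congr rfl fun i hi => ?_
    rw [Finset.mem_range] at hi
    rw [hwt i (by omega), hwt (i+1) (by omega)]
  · rw [Finset.sum_Ico_eq_sum_range]
    refine Finset.sum_congr (by congr 1 <;> omega) fun j hj => ?_
    rw [hwu (n + j) (Nat.le_add_right n j), hwu (n + j + 1) (by omega)]
    have e1 : n + j - n = j := by omega
    have e2 : n + j + 1 - n = j + 1 := by omega
    rw [e1, e2]

lemma ctrl_superadd {p a b c : ℝ} {X : ℝ → ℝ} (hbdd : BddAbove (vset p a c X))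
    (hab : a ≤ b) (hbc : b ≤ c) :
    ctrl p a b X + ctrl p b c X ≤ ctrl p a c X := by
  have hb1 : BddAbove (vset p a b X) := bddAbove_vset_sub hbdd le_rfl hbc
  have hb2 : BddAbove (vset p b c X) := bddAbove_vset_sub hbdd hab le_rfl
  rw [add_comm, ← le_sub_iff_add_le]
  refine csSup_le (vset_nonempty p X hbc) ?_
  rintro v ⟨m, u, hup, rfl⟩
  rw [le_sub_iff_add_le, add_comm, ← le_sub_iff_add_le]
  refine csSup_le (vset_nonempty p X hab) ?_
  rintro v' ⟨n, t, htp, rfl⟩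
  rw [le_sub_iff_add_le]
  obtain ⟨w, hwp, hws⟩ := vsum_concat htp hup
  rw [← hws]
  exact le_ctrl hbdd hwp

lemma ctrl_chain {p : ℝ} {X : ℝ → ℝ} {a b : ℝ} (hbdd : BddAbove (vset p a b X))
    {t : ℕ → ℝ} (hmono : Monotone t) (hta : ∀ j, a ≤ t j) (htb : ∀ j, t j ≤ b)
    (k : ℕ) : ∀ m, ∑ j ∈ Finset.Ico k (k + m), ctrl p (t j) (t (j + 1)) X
      ≤ ctrl p (t k) (t (k + m)) X := by
  intro m
  induction m with
  | zero =>
    simp only [Nat.add_zero, Finset.Ico_self, Finset.sum_empty]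
    exact ctrl_nonneg (bddAbove_vset_sub hbdd (hta k) (htb k)) le_rfl
  | succ m ih =>
    rw [show k + (m + 1) = (k + m) + 1 by omega, Finset.sum_Ico_succ_top (by omega)]
    have hsub : BddAbove (vset p (t k) (t (k + m + 1)) X) :=
      bddAbove_vset_sub hbdd (hta k) (htb _)
    calc (∑ j ∈ Finset.Ico k (k + m), ctrl p (t j) (t (j + 1)) X)
          + ctrl p (t (k + m)) (t (k + m + 1)) X
        ≤ ctrl p (t k) (t (k + m)) X + ctrl p (t (k + m)) (t (k + m + 1)) X := by
          exact add_le_add_left ih _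
      _ ≤ ctrl p (t k) (t (k + m + 1)) X :=
          ctrl_superadd hsub (hmono (Nat.le_add_right k m)) (hmono (Nat.le_succ _))


lemma abs_le_ctrl_rpow {r a b u v : ℝ} {X : ℝ → ℝ} (hr : 0 < r)
    (hb : BddAbove (vset r a b X)) (hau : a ≤ u) (huv : u ≤ v) (hvb : v ≤ b) :
    |X v - X u| ≤ ctrl r a b X ^ (1 / r) := by
  have h1 : |X v - X u| ^ r ≤ ctrl r a b X := abs_rpow_le_ctrl hb hau huv hvb
  have h2 : (|X v - X u| ^ r) ^ (1 / r) ≤ ctrl r a b X ^ (1 / r) :=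
    Real.rpow_le_rpow (Real.rpow_nonneg (abs_nonneg _) _) h1 (by positivity)
  rwa [← Real.rpow_mul (abs_nonneg _), mul_one_div, div_self hr.ne', Real.rpow_one] at h2

lemma vsum_rpow_le {p r E : ℝ} {X : ℝ → ℝ} {n : ℕ} {t : ℕ → ℝ} (hp : 0 < p) (hpr : p ≤ r)
    (hE : 0 ≤ E) (hincr : ∀ i, |X (t (i + 1)) - X (t i)| ≤ E) :
    vsum r X n t ≤ E ^ (r - p) * vsum p X n t := by
  rw [vsum, vsum, Finset.mul_sum]
  refine Finset.sum_le_sum fun i _ => ?_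
  set d := |X (t (i + 1)) - X (t i)| with hd
  have hd0 : 0 ≤ d := abs_nonneg _
  have hdE : d ≤ E := hincr i
  rcases eq_or_lt_of_le hd0 with h0 | h0
  · have hr' : (0:ℝ) < r := lt_of_lt_of_le hp hpr
    rw [← h0, Real.zero_rpow hr'.ne', Real.zero_rpow hp.ne', mul_zero]
  · have : d ^ r = d ^ (r - p) * d ^ p := by
      rw [← Real.rpow_add h0]; ring_nf
    rw [this]
    exact mul_le_mul_of_nonneg_right (Real.rpow_le_rpow hd0 hdE (by linarith))
      (Real.rpow_nonneg hd0 _)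

lemma rs_remove {a b : ℝ} (X Y : ℝ → ℝ) {n : ℕ} {t : ℕ → ℝ} (hpart : IsPart a b n t)
    {i : ℕ} (hi1 : 1 ≤ i) (hi2 : i < n) (hn : 2 ≤ n) :
    ∃ t' : ℕ → ℝ, IsPart a b (n - 1) t' ∧
      rs X Y n t - rs X Y (n - 1) t'
        = (X (t i) - X (t (i - 1))) * (Y (t (i + 1)) - Y (t i)) := by
  set t' : ℕ → ℝ := fun j => if j < i then t j else t (j + 1) with ht'
  have hp' : IsPart a b (n - 1) t' := by
    refine ⟨monotone_nat_of_le_succ fun j => ?_, ?_, fun j hj => ?_⟩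
    · by_cases h : j + 1 < i
      · simp only [ht', if_pos h, if_pos (by omega : j < i)]
        exact hpart.1 (by omega)
      · by_cases h2 : j < i
        · simp only [ht', if_pos h2, if_neg h]
          exact hpart.1 (by omega)
        · simp only [ht', if_neg h2, if_neg (by omega : ¬ j + 1 < i)]
          exact hpart.1 (by omega)
    · simp only [ht', if_pos (by omega : 0 < i)]
      exact hpart.2.1
    · simp only [ht', if_neg (by omega : ¬ j < i)]
      exact hpart.2.2 _ (by omega)
  refine ⟨t', hp', ?_⟩
  have hsplit1 : rs X Y n t = (∑ j ∈ Finset.Ico 0 (i - 1), X (t j) * (Y (t (j + 1)) - Y (t j)))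
      + X (t (i - 1)) * (Y (t i) - Y (t (i - 1))) + X (t i) * (Y (t (i + 1)) - Y (t i))
      + ∑ j ∈ Finset.Ico (i + 1) n, X (t j) * (Y (t (j + 1)) - Y (t j)) := by
    rw [rs, Finset.range_eq_Ico,
      ← Finset.sum_Ico_consecutive _ (by omega : 0 ≤ i + 1) (by omega : i + 1 ≤ n),
      ← Finset.sum_Ico_consecutive _ (by omega : 0 ≤ i - 1) (by omega : i - 1 ≤ i + 1)]
    have hmidsplit : ∑ j ∈ Finset.Ico (i - 1) (i + 1), X (t j) * (Y (t (j + 1)) - Y (t j))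
        = X (t (i - 1)) * (Y (t i) - Y (t (i - 1))) + X (t i) * (Y (t (i + 1)) - Y (t i)) := by
      have eii : i + 1 = (i - 1) + 1 + 1 := by omega
      rw [eii, Finset.sum_Ico_succ_top (by omega), Finset.sum_Ico_succ_top (by omega),
        Finset.Ico_self, Finset.sum_empty]
      have e : i - 1 + 1 = i := by omega
      rw [e]
      ring
    rw [hmidsplit]
    ring
  have hsplit2 : rs X Y (n - 1) t'
      = (∑ j ∈ Finset.Ico 0 (i - 1), X (t j) * (Y (t (j + 1)) - Y (t j)))
      + X (t (i - 1)) * (Y (t (i + 1)) - Y (t (i - 1)))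
      + ∑ j ∈ Finset.Ico (i + 1) n, X (t j) * (Y (t (j + 1)) - Y (t j)) := by
    rw [rs, Finset.range_eq_Ico,
      ← Finset.sum_Ico_consecutive _ (by omega : 0 ≤ i) (by omega : i ≤ n - 1),
      ← Finset.sum_Ico_consecutive _ (by omega : 0 ≤ i - 1) (by omega : i - 1 ≤ i)]
    have h1 : ∑ j ∈ Finset.Ico (i - 1) i, X (t' j) * (Y (t' (j + 1)) - Y (t' j))
        = X (t (i - 1)) * (Y (t (i + 1)) - Y (t (i - 1))) := by
      have hsingle : Finset.Ico (i - 1) i = {i - 1} := by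
        have h := Nat.Ico_succ_singleton (i - 1)
        rw [show i - 1 + 1 = i by omega] at h
        exact h
      rw [hsingle, Finset.sum_singleton]
      have e : i - 1 + 1 = i := by omega
      rw [e]
      simp only [ht', if_pos (by omega : i - 1 < i), if_neg (lt_irrefl i)]
    have h2 : ∑ j ∈ Finset.Ico 0 (i - 1), X (t' j) * (Y (t' (j + 1)) - Y (t' j))
        = ∑ j ∈ Finset.Ico 0 (i - 1), X (t j) * (Y (t (j + 1)) - Y (t j)) := by
      refine Finset.sum_congr rfl fun j hj => ?_
      rw [Finset.mem_Ico] at hj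
      simp only [ht', if_pos (by omega : j < i), if_pos (by omega : j + 1 < i)]
    have h3 : ∑ j ∈ Finset.Ico i (n - 1), X (t' j) * (Y (t' (j + 1)) - Y (t' j))
        = ∑ j ∈ Finset.Ico (i + 1) n, X (t j) * (Y (t (j + 1)) - Y (t j)) := by
      rw [Finset.sum_Ico_eq_sum_range, Finset.sum_Ico_eq_sum_range]
      refine Finset.sum_congr (by congr 1 <;> omega) fun j hj => ?_
      simp only [ht', if_neg (by omega : ¬ i + j < i), if_neg (by omega : ¬ i + j + 1 < i)]
      have e1 : i + j + 1 = i + 1 + j := by omega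
      rw [e1]
    rw [h1, h2, h3]
  rw [hsplit1, hsplit2]
  ring


lemma young_max {r s a b : ℝ} {X Y : ℝ → ℝ} (hr : 0 < r) (hs : 0 < s)
    (hbX : BddAbove (vset r a b X)) (hbY : BddAbove (vset s a b Y)) :
    ∀ n t, IsPart a b n t → 1 ≤ n →
      |rs X Y n t - X a * (Y b - Y a)| ≤
        (∑ k ∈ Finset.range (n - 1), (2 / ((k : ℝ) + 1)) ^ (1 / r + 1 / s))
          * (ctrl r a b X ^ (1 / r) * ctrl s a b Y ^ (1 / s)) := by
  intro n
  induction n using Nat.strong_induction_on with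
  | _ n ih =>
  intro t hpart hn
  have hab : a ≤ b := hpart.le
  set A := ctrl r a b X with hA
  set B := ctrl s a b Y with hB
  have hA0 : 0 ≤ A := ctrl_nonneg hbX hab
  have hB0 : 0 ≤ B := ctrl_nonneg hbY hab
  have hsum0 : ∀ m : ℕ, 0 ≤ ∑ k ∈ Finset.range m, (2 / ((k : ℝ) + 1)) ^ (1 / r + 1 / s) :=
    fun m => Finset.sum_nonneg fun k _ => Real.rpow_nonneg (by positivity) _
  have hRHS0 : 0 ≤ (∑ k ∈ Finset.range (n - 1), (2 / ((k : ℝ) + 1)) ^ (1 / r + 1 / s))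
      * (A ^ (1 / r) * B ^ (1 / s)) :=
    mul_nonneg (hsum0 _) (mul_nonneg (Real.rpow_nonneg hA0 _) (Real.rpow_nonneg hB0 _))
  rcases eq_or_lt_of_le hn with h1 | h2
  · -- n = 1
    have hn1 : n = 1 := h1.symm
    subst hn1
    have e0 : t 0 = a := hpart.2.1
    have e1 : t 1 = b := hpart.2.2 1 le_rfl
    have hrs1 : rs X Y 1 t = X a * (Y b - Y a) := by rw [rs, Finset.sum_range_one, e0, e1]
    rw [hrs1, sub_self, abs_zero]
    exact hRHS0
  -- 2 ≤ n
  by_cases hAz : A = 0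
  · have hXc : ∀ i, X (t i) = X (t 0) := by
      intro i
      have hle : |X (t i) - X (t 0)| ^ r ≤ 0 := by
        have h := abs_rpow_le_ctrl hbX (hpart.left_le 0) (hpart.1 (Nat.zero_le i))
          (hpart.le_right i)
        rw [← hA, hAz] at h
        exact h
      have h0 : |X (t i) - X (t 0)| = 0 := by
        rcases eq_or_lt_of_le (abs_nonneg (X (t i) - X (t 0))) with h | h
        · exact h.symm
        · exact absurd (lt_of_lt_of_le (Real.rpow_pos_of_pos h r) hle) (lt_irrefl 0)
      have := abs_eq_zero.mp h0
      linarith [sub_eq_zero.mp this]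
    have hrs : rs X Y n t = X a * (Y b - Y a) := by
      rw [rs]
      rw [Finset.sum_congr rfl (fun i (_ : i ∈ Finset.range n) => by
        rw [hXc i, hpart.2.1] : ∀ i ∈ Finset.range n,
          X (t i) * (Y (t (i + 1)) - Y (t i)) = X a * (Y (t (i + 1)) - Y (t i)))]
      rw [← Finset.mul_sum, Finset.sum_range_sub (fun i => Y (t i)),
        hpart.2.2 n le_rfl, hpart.2.1]
    rw [hrs, sub_self, abs_zero]
    exact hRHS0
  by_cases hBz : B = 0
  · have hYc : ∀ i, Y (t i) = Y (t 0) := by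
      intro i
      have hle : |Y (t i) - Y (t 0)| ^ s ≤ 0 := by
        have h := abs_rpow_le_ctrl hbY (hpart.left_le 0) (hpart.1 (Nat.zero_le i))
          (hpart.le_right i)
        rw [← hB, hBz] at h
        exact h
      have h0 : |Y (t i) - Y (t 0)| = 0 := by
        rcases eq_or_lt_of_le (abs_nonneg (Y (t i) - Y (t 0))) with h | h
        · exact h.symm
        · exact absurd (lt_of_lt_of_le (Real.rpow_pos_of_pos h s) hle) (lt_irrefl 0)
      have := abs_eq_zero.mp h0
      linarith [sub_eq_zero.mp this]
    have hrs : rs X Y n t = 0 := by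
      rw [rs]
      apply Finset.sum_eq_zero
      intro i _
      rw [hYc i, hYc (i + 1), sub_self, mul_zero]
    have hYb : Y b = Y a := by
      rw [← hpart.2.2 n le_rfl, ← hpart.2.1, hYc n]
    rw [hrs, hYb]
    simpa using hRHS0
  have hA' : 0 < A := lt_of_le_of_ne hA0 (Ne.symm hAz)
  have hB' : 0 < B := lt_of_le_of_ne hB0 (Ne.symm hBz)
  set F : ℕ → ℝ := fun i => ctrl r (t (i - 1)) (t i) X / A + ctrl s (t i) (t (i + 1)) Y / B
    with hF
  have hsubX : ∀ u v : ℕ, BddAbove (vset r (t u) (t v) X) := fun u v =>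
    bddAbove_vset_sub hbX (hpart.left_le u) (hpart.le_right v)
  have hsubY : ∀ u v : ℕ, BddAbove (vset s (t u) (t v) Y) := fun u v =>
    bddAbove_vset_sub hbY (hpart.left_le u) (hpart.le_right v)
  have hF0 : ∀ i, 0 ≤ F i := fun i =>
    add_nonneg (div_nonneg (ctrl_nonneg (hsubX _ _) (hpart.1 (by omega))) hA0)
      (div_nonneg (ctrl_nonneg (hsubY _ _) (hpart.1 (by omega))) hB0)
  have hchainX : ∑ i ∈ Finset.Ico 1 n, ctrl r (t (i - 1)) (t i) X ≤ A := by
    have h := ctrl_chain hbX hpart.1 hpart.left_le hpart.le_right 0 (n - 1)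
    have hEq : ∑ i ∈ Finset.Ico 1 n, ctrl r (t (i - 1)) (t i) X
        = ∑ j ∈ Finset.Ico 0 (0 + (n - 1)), ctrl r (t j) (t (j + 1)) X := by
      rw [Finset.sum_Ico_eq_sum_range, Finset.sum_Ico_eq_sum_range]
      refine Finset.sum_congr (by congr 1 <;> omega) fun j hj => ?_
      rw [show 1 + j - 1 = j from by omega, show 1 + j = j + 1 from by omega,
        show 0 + j = j from by omega]
    rw [hEq]
    exact le_trans h (ctrl_mono_interval hbX (hpart.left_le 0) (hpart.1 (Nat.zero_le _))
      (hpart.le_right _))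
  have hchainY : ∑ i ∈ Finset.Ico 1 n, ctrl s (t i) (t (i + 1)) Y ≤ B := by
    have h := ctrl_chain hbY hpart.1 hpart.left_le hpart.le_right 1 (n - 1)
    rw [show 1 + (n - 1) = n from by omega] at h
    exact le_trans h (ctrl_mono_interval hbY (hpart.left_le 1) (hpart.1 (by omega))
      (hpart.le_right n))
  have hFsum : ∑ i ∈ Finset.Ico 1 n, F i ≤ 2 := by
    simp only [hF]
    rw [Finset.sum_add_distrib, ← Finset.sum_div, ← Finset.sum_div]
    have h1 : (∑ i ∈ Finset.Ico 1 n, ctrl r (t (i - 1)) (t i) X) / A ≤ 1 := by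
      rw [div_le_one hA']
      exact hchainX
    have h2 : (∑ i ∈ Finset.Ico 1 n, ctrl s (t i) (t (i + 1)) Y) / B ≤ 1 := by
      rw [div_le_one hB']
      exact hchainY
    linarith
  have hne : (Finset.Ico 1 n).Nonempty := ⟨1, Finset.mem_Ico.mpr ⟨le_rfl, by omega⟩⟩
  obtain ⟨i, hiS, hmin⟩ := Finset.exists_min_image (Finset.Ico 1 n) F hne
  rw [Finset.mem_Ico] at hiS
  have hn2 : (2 : ℝ) ≤ (n : ℝ) := by exact_mod_cast (by omega : 2 ≤ n)
  have hnpos : (0 : ℝ) < (n : ℝ) - 1 := by linarith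
  have hFile : F i ≤ 2 / ((n : ℝ) - 1) := by
    have hcs := Finset.card_nsmul_le_sum (Finset.Ico 1 n) F (F i) (fun j hj => hmin j hj)
    rw [nsmul_eq_mul, Nat.card_Ico] at hcs
    have hcast : ((n - 1 : ℕ) : ℝ) = (n : ℝ) - 1 := by
      rw [Nat.cast_sub (by omega : 1 ≤ n)]
      norm_num
    rw [hcast] at hcs
    rw [le_div_iff₀ hnpos]
    calc F i * ((n : ℝ) - 1) = ((n : ℝ) - 1) * F i := by ring
      _ ≤ ∑ j ∈ Finset.Ico 1 n, F j := hcs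
      _ ≤ 2 := hFsum
  have hXi : |X (t i) - X (t (i - 1))| ≤ (A * F i) ^ (1 / r) := by
    have h1 : |X (t i) - X (t (i - 1))| ≤ ctrl r (t (i - 1)) (t i) X ^ (1 / r) :=
      abs_le_ctrl_rpow hr (hsubX (i - 1) i) le_rfl (hpart.1 (by omega)) le_rfl
    refine le_trans h1 (Real.rpow_le_rpow (ctrl_nonneg (hsubX _ _) (hpart.1 (by omega))) ?_
      (by positivity))
    have hfle : ctrl r (t (i - 1)) (t i) X / A ≤ F i :=
      le_add_of_nonneg_right (div_nonneg (ctrl_nonneg (hsubY _ _) (hpart.1 (by omega))) hB0)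
    rw [div_le_iff₀ hA'] at hfle
    linarith [hfle]
  have hYi : |Y (t (i + 1)) - Y (t i)| ≤ (B * F i) ^ (1 / s) := by
    have h1 : |Y (t (i + 1)) - Y (t i)| ≤ ctrl s (t i) (t (i + 1)) Y ^ (1 / s) :=
      abs_le_ctrl_rpow hs (hsubY i (i + 1)) le_rfl (hpart.1 (by omega)) le_rfl
    refine le_trans h1 (Real.rpow_le_rpow (ctrl_nonneg (hsubY _ _) (hpart.1 (by omega))) ?_
      (by positivity))
    have hfle : ctrl s (t i) (t (i + 1)) Y / B ≤ F i :=
      le_add_of_nonneg_left (div_nonneg (ctrl_nonneg (hsubX _ _) (hpart.1 (by omega))) hA0)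
    rw [div_le_iff₀ hB'] at hfle
    linarith [hfle]
  have hprod : |X (t i) - X (t (i - 1))| * |Y (t (i + 1)) - Y (t i)|
      ≤ (A ^ (1 / r) * B ^ (1 / s)) * F i ^ (1 / r + 1 / s) := by
    have hm := mul_le_mul hXi hYi (abs_nonneg _)
      (Real.rpow_nonneg (mul_nonneg hA0 (hF0 i)) _)
    refine le_trans hm (le_of_eq ?_)
    rw [Real.mul_rpow hA0 (hF0 i), Real.mul_rpow hB0 (hF0 i),
      Real.rpow_add' (hF0 i) (by positivity)]
    ring
  have hFθ : F i ^ (1 / r + 1 / s) ≤ (2 / ((n : ℝ) - 1)) ^ (1 / r + 1 / s) :=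
    Real.rpow_le_rpow (hF0 i) hFile (by positivity)
  obtain ⟨t', hp', hdiff⟩ := rs_remove X Y hpart hiS.1 hiS.2 (by omega)
  have hih := ih (n - 1) (by omega) t' hp' (by omega)
  have key : |rs X Y n t - rs X Y (n - 1) t'|
      ≤ (A ^ (1 / r) * B ^ (1 / s)) * (2 / ((n : ℝ) - 1)) ^ (1 / r + 1 / s) := by
    rw [hdiff, abs_mul]
    calc |X (t i) - X (t (i - 1))| * |Y (t (i + 1)) - Y (t i)|
        ≤ (A ^ (1 / r) * B ^ (1 / s)) * F i ^ (1 / r + 1 / s) := hprod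
      _ ≤ (A ^ (1 / r) * B ^ (1 / s)) * (2 / ((n : ℝ) - 1)) ^ (1 / r + 1 / s) :=
          mul_le_mul_of_nonneg_left hFθ
            (mul_nonneg (Real.rpow_nonneg hA0 _) (Real.rpow_nonneg hB0 _))
  have hsumsplit : ∑ k ∈ Finset.range (n - 1), (2 / ((k : ℝ) + 1)) ^ (1 / r + 1 / s)
      = (∑ k ∈ Finset.range (n - 1 - 1), (2 / ((k : ℝ) + 1)) ^ (1 / r + 1 / s))
        + (2 / ((n : ℝ) - 1)) ^ (1 / r + 1 / s) := by
    rw [show n - 1 = (n - 1 - 1) + 1 from by omega, Finset.sum_range_succ]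
    congr 2
    rw [Nat.cast_sub (by omega : 1 ≤ n - 1), Nat.cast_sub (by omega : 1 ≤ n)]
    norm_num
  calc |rs X Y n t - X a * (Y b - Y a)|
      ≤ |rs X Y n t - rs X Y (n - 1) t'| + |rs X Y (n - 1) t' - X a * (Y b - Y a)| :=
        abs_sub_le _ _ _
    _ ≤ (A ^ (1 / r) * B ^ (1 / s)) * (2 / ((n : ℝ) - 1)) ^ (1 / r + 1 / s)
        + (∑ k ∈ Finset.range (n - 1 - 1), (2 / ((k : ℝ) + 1)) ^ (1 / r + 1 / s))
          * (A ^ (1 / r) * B ^ (1 / s)) := add_le_add key hih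
    _ = (∑ k ∈ Finset.range (n - 1), (2 / ((k : ℝ) + 1)) ^ (1 / r + 1 / s))
          * (A ^ (1 / r) * B ^ (1 / s)) := by
        rw [hsumsplit]
        ring


lemma exists_K {θ : ℝ} (hθ : 1 < θ) :
    ∃ K : ℝ, 0 ≤ K ∧ ∀ m : ℕ, ∑ k ∈ Finset.range m, (2 / ((k : ℝ) + 1)) ^ θ ≤ K := by
  have h1 : Summable (fun n : ℕ => 1 / (n : ℝ) ^ θ) := Real.summable_one_div_nat_rpow.mpr hθ
  have h2 : Summable (fun k : ℕ => 1 / ((k : ℝ) + 1) ^ θ) := by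
    have h := (summable_nat_add_iff 1).mpr h1
    refine h.congr fun k => ?_
    push_cast
    rfl
  have hfs : Summable (fun k : ℕ => (2 / ((k : ℝ) + 1)) ^ θ) := by
    refine (h2.mul_left ((2 : ℝ) ^ θ)).congr fun k => ?_
    rw [mul_one_div, ← Real.div_rpow (by norm_num) (by positivity)]
  refine ⟨∑' k : ℕ, (2 / ((k : ℝ) + 1)) ^ θ,
    tsum_nonneg fun k => Real.rpow_nonneg (by positivity) _, fun m => ?_⟩
  exact Summable.sum_le_tsum _ (fun k _ => Real.rpow_nonneg (by positivity) _) hfs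

lemma rs_refine {a b : ℝ} (X Y : ℝ → ℝ) {r s K : ℝ} (hr : 0 < r) (hs : 0 < s)
    (hK0 : 0 ≤ K)
    (hK : ∀ m : ℕ, ∑ k ∈ Finset.range m, (2 / ((k : ℝ) + 1)) ^ (1 / r + 1 / s) ≤ K)
    {n m : ℕ} {t u : ℕ → ℝ} (htp : IsPart a b n t) (hup : IsPart a b m u)
    {φ : ℕ → ℕ} (hφm : Monotone φ) (hφ0 : φ 0 = 0) (hφn : φ n = m)
    (hφt : ∀ i, i ≤ n → u (φ i) = t i)
    (hbX : ∀ i, BddAbove (vset r (t i) (t (i + 1)) X))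
    (hbY : ∀ i, BddAbove (vset s (t i) (t (i + 1)) Y)) :
    |rs X Y m u - rs X Y n t| ≤ K * ∑ i ∈ Finset.range n,
      ctrl r (t i) (t (i + 1)) X ^ (1 / r) * ctrl s (t i) (t (i + 1)) Y ^ (1 / s) := by
  have hφmono : ∀ i, φ i ≤ φ (i + 1) := fun i => hφm (Nat.le_succ i)
  have hsplit : ∀ N, N ≤ n →
      ∑ j ∈ Finset.range (φ N), X (u j) * (Y (u (j + 1)) - Y (u j))
      = ∑ i ∈ Finset.range N, ∑ j ∈ Finset.Ico (φ i) (φ (i + 1)),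
          X (u j) * (Y (u (j + 1)) - Y (u j)) := by
    intro N
    induction N with
    | zero => simp [hφ0]
    | succ N ihN =>
      intro hN
      rw [Finset.sum_range_succ, ← ihN (by omega), Finset.range_eq_Ico]
      rw [Finset.range_eq_Ico]
      exact (Finset.sum_Ico_consecutive (fun j => X (u j) * (Y (u (j + 1)) - Y (u j))) (Nat.zero_le _) (hφmono N)).symm
  have hmain : rs X Y m u = ∑ i ∈ Finset.range n, ∑ j ∈ Finset.Ico (φ i) (φ (i + 1)),
      X (u j) * (Y (u (j + 1)) - Y (u j)) := by
    rw [rs, ← hφn]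
    exact hsplit n le_rfl
  have hterm : ∀ i, i < n →
      |(∑ j ∈ Finset.Ico (φ i) (φ (i + 1)), X (u j) * (Y (u (j + 1)) - Y (u j)))
        - X (t i) * (Y (t (i + 1)) - Y (t i))|
      ≤ K * (ctrl r (t i) (t (i + 1)) X ^ (1 / r) * ctrl s (t i) (t (i + 1)) Y ^ (1 / s)) := by
    intro i hi
    have htt : t i ≤ t (i + 1) := htp.1 (Nat.le_succ i)
    have hRHS0 : 0 ≤ K * (ctrl r (t i) (t (i + 1)) X ^ (1 / r)
        * ctrl s (t i) (t (i + 1)) Y ^ (1 / s)) :=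
      mul_nonneg hK0 (mul_nonneg (Real.rpow_nonneg (ctrl_nonneg (hbX i) htt) _)
        (Real.rpow_nonneg (ctrl_nonneg (hbY i) htt) _))
    set L := φ (i + 1) - φ i with hL
    set v : ℕ → ℝ := fun k => u (min (φ i + k) (φ (i + 1))) with hv
    have hφi := hφmono i
    have hvpart : IsPart (t i) (t (i + 1)) L v := by
      refine ⟨monotone_nat_of_le_succ fun k => hup.1 (by omega), ?_, fun k hk => ?_⟩
      · simp only [hv]
        rw [Nat.add_zero, min_eq_left hφi]
        exact hφt i (by omega)
      · simp only [hv]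
        rw [min_eq_right (by omega)]
        exact hφt (i + 1) (by omega)
    have hrsv : rs X Y L v = ∑ j ∈ Finset.Ico (φ i) (φ (i + 1)),
        X (u j) * (Y (u (j + 1)) - Y (u j)) := by
      rw [rs, Finset.sum_Ico_eq_sum_range]
      refine Finset.sum_congr rfl fun k hk => ?_
      rw [Finset.mem_range] at hk
      have h1 : min (φ i + k) (φ (i + 1)) = φ i + k := by omega
      have h2 : min (φ i + (k + 1)) (φ (i + 1)) = φ i + (k + 1) := by omega
      simp only [hv, h1, h2]
      rw [show φ i + (k + 1) = φ i + k + 1 from by omega]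
    by_cases hL0 : L = 0
    · have he : t (i + 1) = t i := by
        rw [← hφt i (by omega), ← hφt (i + 1) (by omega)]
        congr 1
        omega
      have hempty : Finset.Ico (φ i) (φ (i + 1)) = ∅ := by
        apply Finset.Ico_eq_empty
        omega
      have hmz : X (t i) * (Y (t (i + 1)) - Y (t i)) = 0 := by
        rw [he, sub_self, mul_zero]
      rw [hempty, Finset.sum_empty, hmz]
      simpa using hRHS0
    · have hym := young_max hr hs (hbX i) (hbY i) L v hvpart (by omega)
      rw [hrsv] at hym
      refine le_trans hym (mul_le_mul_of_nonneg_right (hK _)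
        (mul_nonneg (Real.rpow_nonneg (ctrl_nonneg (hbX i) htt) _)
          (Real.rpow_nonneg (ctrl_nonneg (hbY i) htt) _)))
  have hdiff : rs X Y m u - rs X Y n t = ∑ i ∈ Finset.range n,
      ((∑ j ∈ Finset.Ico (φ i) (φ (i + 1)), X (u j) * (Y (u (j + 1)) - Y (u j)))
        - X (t i) * (Y (t (i + 1)) - Y (t i))) := by
    rw [Finset.sum_sub_distrib, ← hmain]
    simp only [rs]
  rw [hdiff]
  refine le_trans (Finset.abs_sum_le_sum_abs _ _) ?_
  rw [Finset.mul_sum]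
  exact Finset.sum_le_sum fun i hi => hterm i (Finset.mem_range.mp hi)


lemma holder_sum {r s : ℝ} (hr : 0 < r) (hs : 0 < s) (hrs : 1 ≤ 1 / r + 1 / s)
    {n : ℕ} {f g : ℕ → ℝ} (hf : ∀ i, 0 ≤ f i) (hg : ∀ i, 0 ≤ g i) :
    ∑ i ∈ Finset.range n, f i * g i ≤
      (∑ i ∈ Finset.range n, f i ^ r) ^ (1 / r) * (∑ i ∈ Finset.range n, g i ^ s) ^ (1 / s) := by
  set Sa := ∑ i ∈ Finset.range n, f i ^ r with hSa
  set Sb := ∑ i ∈ Finset.range n, g i ^ s with hSb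
  have hSa0 : 0 ≤ Sa := Finset.sum_nonneg fun i _ => Real.rpow_nonneg (hf i) _
  have hSb0 : 0 ≤ Sb := Finset.sum_nonneg fun i _ => Real.rpow_nonneg (hg i) _
  have hRHS0 : 0 ≤ Sa ^ (1 / r) * Sb ^ (1 / s) :=
    mul_nonneg (Real.rpow_nonneg hSa0 _) (Real.rpow_nonneg hSb0 _)
  by_cases hSaz : Sa = 0
  · have hf0 : ∀ i ∈ Finset.range n, f i = 0 := by
      intro i hi
      have h2 : f i ^ r = 0 := (Finset.sum_eq_zero_iff_of_nonneg
        (fun j _ => Real.rpow_nonneg (hf j) _)).mp hSaz i hi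
      rcases eq_or_lt_of_le (hf i) with h3 | h3
      · exact h3.symm
      · exact absurd h2 (ne_of_gt (Real.rpow_pos_of_pos h3 r))
    have : ∑ i ∈ Finset.range n, f i * g i = 0 :=
      Finset.sum_eq_zero fun i hi => by rw [hf0 i hi, zero_mul]
    rw [this]
    exact hRHS0
  by_cases hSbz : Sb = 0
  · have hg0 : ∀ i ∈ Finset.range n, g i = 0 := by
      intro i hi
      have h2 : g i ^ s = 0 := (Finset.sum_eq_zero_iff_of_nonneg
        (fun j _ => Real.rpow_nonneg (hg j) _)).mp hSbz i hi
      rcases eq_or_lt_of_le (hg i) with h3 | h3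
      · exact h3.symm
      · exact absurd h2 (ne_of_gt (Real.rpow_pos_of_pos h3 s))
    have : ∑ i ∈ Finset.range n, f i * g i = 0 :=
      Finset.sum_eq_zero fun i hi => by rw [hg0 i hi, mul_zero]
    rw [this]
    exact hRHS0
  have hSa' : 0 < Sa := lt_of_le_of_ne hSa0 (Ne.symm hSaz)
  have hSb' : 0 < Sb := lt_of_le_of_ne hSb0 (Ne.symm hSbz)
  set τ := 1 / r + 1 / s with hτdef
  have hτ0 : 0 < τ := by positivity
  have hw1 : 0 < 1 / (r * τ) := by positivity
  have hw2 : 0 < 1 / (s * τ) := by positivity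
  have hw : 1 / (r * τ) + 1 / (s * τ) = 1 := by
    rw [hτdef]
    field_simp
  have key : ∀ i ∈ Finset.range n, f i * g i ≤
      Sa ^ (1 / r) * Sb ^ (1 / s) *
        ((1 / (r * τ)) * (f i ^ r / Sa) + (1 / (s * τ)) * (g i ^ s / Sb)) := by
    intro i hi
    set x := f i ^ r / Sa with hxdef
    set y := g i ^ s / Sb with hydef
    have hx0 : 0 ≤ x := div_nonneg (Real.rpow_nonneg (hf i) _) hSa0
    have hy0 : 0 ≤ y := div_nonneg (Real.rpow_nonneg (hg i) _) hSb0
    have hx1 : x ≤ 1 := by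
      rw [hxdef, div_le_one hSa']
      exact Finset.single_le_sum (fun j _ => Real.rpow_nonneg (hf j) _) hi
    have hy1 : y ≤ 1 := by
      rw [hydef, div_le_one hSb']
      exact Finset.single_le_sum (fun j _ => Real.rpow_nonneg (hg j) _) hi
    have hfi : f i = x ^ (1 / r) * Sa ^ (1 / r) := by
      rw [hxdef, Real.div_rpow (Real.rpow_nonneg (hf i) _) hSa0,
        ← Real.rpow_mul (hf i), mul_one_div, div_self hr.ne', Real.rpow_one]
      field_simp
    have hgi : g i = y ^ (1 / s) * Sb ^ (1 / s) := by
      rw [hydef, Real.div_rpow (Real.rpow_nonneg (hg i) _) hSb0,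
        ← Real.rpow_mul (hg i), mul_one_div, div_self hs.ne', Real.rpow_one]
      field_simp
    have hstep1 : x ^ (1 / r) * y ^ (1 / s) = (x ^ (1 / (r * τ)) * y ^ (1 / (s * τ))) ^ τ := by
      rw [Real.mul_rpow (Real.rpow_nonneg hx0 _) (Real.rpow_nonneg hy0 _),
        ← Real.rpow_mul hx0, ← Real.rpow_mul hy0]
      congr 2
      · field_simp
      · field_simp
    have hle1 : (x ^ (1 / (r * τ)) * y ^ (1 / (s * τ))) ^ τ
        ≤ x ^ (1 / (r * τ)) * y ^ (1 / (s * τ)) := by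
      set z := x ^ (1 / (r * τ)) * y ^ (1 / (s * τ)) with hz
      have hz0 : 0 ≤ z := mul_nonneg (Real.rpow_nonneg hx0 _) (Real.rpow_nonneg hy0 _)
      have hz1 : z ≤ 1 := mul_le_one₀ (Real.rpow_le_one hx0 hx1 hw1.le)
        (Real.rpow_nonneg hy0 _) (Real.rpow_le_one hy0 hy1 hw2.le)
      rcases eq_or_lt_of_le hz0 with h0 | h0
      · rw [← h0, Real.zero_rpow hτ0.ne']
      · calc z ^ τ ≤ z ^ (1 : ℝ) := Real.rpow_le_rpow_of_exponent_ge h0 hz1 hrs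
          _ = z := Real.rpow_one z
    have hle2 : x ^ (1 / (r * τ)) * y ^ (1 / (s * τ))
        ≤ (1 / (r * τ)) * x + (1 / (s * τ)) * y :=
      Real.geom_mean_le_arith_mean2_weighted hw1.le hw2.le hx0 hy0 hw
    calc f i * g i = (x ^ (1 / r) * y ^ (1 / s)) * (Sa ^ (1 / r) * Sb ^ (1 / s)) := by
          rw [hfi, hgi]
          ring
      _ ≤ ((1 / (r * τ)) * x + (1 / (s * τ)) * y) * (Sa ^ (1 / r) * Sb ^ (1 / s)) := by
          refine mul_le_mul_of_nonneg_right ?_ hRHS0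
          rw [hstep1]
          exact le_trans hle1 hle2
      _ = Sa ^ (1 / r) * Sb ^ (1 / s) * ((1 / (r * τ)) * x + (1 / (s * τ)) * y) := by ring
  calc ∑ i ∈ Finset.range n, f i * g i
      ≤ ∑ i ∈ Finset.range n, Sa ^ (1 / r) * Sb ^ (1 / s) *
          ((1 / (r * τ)) * (f i ^ r / Sa) + (1 / (s * τ)) * (g i ^ s / Sb)) :=
        Finset.sum_le_sum key
    _ = Sa ^ (1 / r) * Sb ^ (1 / s) := by
        rw [← Finset.mul_sum, Finset.sum_add_distrib, ← Finset.mul_sum, ← Finset.mul_sum,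
          ← Finset.sum_div, ← Finset.sum_div, ← hSa, ← hSb, div_self hSa'.ne',
          div_self hSb'.ne', mul_one, mul_one, hw, mul_one]


lemma common_refinement {a b : ℝ} {n m : ℕ} {t u : ℕ → ℝ}
    (htp : IsPart a b n t) (hup : IsPart a b m u) :
    ∃ (N : ℕ) (w : ℕ → ℝ) (φ ψ : ℕ → ℕ), IsPart a b N w ∧
      Monotone φ ∧ φ 0 = 0 ∧ φ n = N ∧ (∀ i, i ≤ n → w (φ i) = t i) ∧
      Monotone ψ ∧ ψ 0 = 0 ∧ ψ m = N ∧ (∀ i, i ≤ m → w (ψ i) = u i) := by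
  classical
  set P : Finset ℝ := ((Finset.range (n + 1)).image t) ∪ ((Finset.range (m + 1)).image u)
    with hP
  set l : List ℝ := P.sort (· ≤ ·) with hl
  have hmemP : ∀ x ∈ P, a ≤ x ∧ x ≤ b := by
    intro x hx
    rw [hP, Finset.mem_union] at hx
    rcases hx with hx | hx <;> obtain ⟨i, _, rfl⟩ := Finset.mem_image.mp hx
    · exact ⟨htp.left_le i, htp.le_right i⟩
    · exact ⟨hup.left_le i, hup.le_right i⟩
  have htP : ∀ i, i ≤ n → t i ∈ P := fun i hi => Finset.mem_union_left _
    (Finset.mem_image.mpr ⟨i, Finset.mem_range.mpr (by omega), rfl⟩)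
  have huP : ∀ i, i ≤ m → u i ∈ P := fun i hi => Finset.mem_union_right _
    (Finset.mem_image.mpr ⟨i, Finset.mem_range.mpr (by omega), rfl⟩)
  have haP : a ∈ P := htp.2.1 ▸ htP 0 (Nat.zero_le n)
  have hbP : b ∈ P := htp.2.2 n le_rfl ▸ htP n le_rfl
  have hlen : 0 < l.length := by
    rw [hl, Finset.length_sort]
    exact Finset.card_pos.mpr ⟨a, haP⟩
  have hsortle : l.Pairwise (· ≤ ·) := Finset.pairwise_sort _ _
  have hsortlt : l.Pairwise (· < ·) := (Finset.sortedLT_sort _).pairwise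
  have hmeml : ∀ x, x ∈ l ↔ x ∈ P := fun x => Finset.mem_sort _
  have hgetP : ∀ (k : ℕ) (h : k < l.length), l.get ⟨k, h⟩ ∈ P :=
    fun k h => (hmeml _).mp (l.get_mem _)
  set w : ℕ → ℝ := fun k => if h : k < l.length then l.get ⟨k, h⟩ else b with hw
  have hwget : ∀ (k : ℕ) (h : k < l.length), w k = l.get ⟨k, h⟩ := fun k h => dif_pos h
  have hwmono : Monotone w := by
    refine monotone_nat_of_le_succ fun k => ?_
    by_cases h1 : k + 1 < l.length
    · rw [hwget k (by omega), hwget (k + 1) h1]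
      exact hsortle.rel_get_of_le (Fin.mk_le_mk.mpr (Nat.le_succ k))
    · by_cases h2 : k < l.length
      · rw [hwget k h2]
        simp only [hw, dif_neg h1]
        exact (hmemP _ (hgetP k h2)).2
      · simp only [hw, dif_neg h1, dif_neg h2, le_refl]
  have hidxlt : ∀ x ∈ P, l.idxOf x < l.length :=
    fun x hx => List.idxOf_lt_length_iff.mpr ((hmeml x).mpr hx)
  have hwidx : ∀ x ∈ P, w (l.idxOf x) = x := by
    intro x hx
    rw [hwget _ (hidxlt x hx)]
    exact List.idxOf_get _
  have hidxmono : ∀ x ∈ P, ∀ y ∈ P, x ≤ y → l.idxOf x ≤ l.idxOf y := by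
    intro x hx y hy hxy
    by_contra hcon
    push_neg at hcon
    have hlt := hsortlt.rel_get_of_lt (a := ⟨l.idxOf y, hidxlt y hy⟩)
      (b := ⟨l.idxOf x, hidxlt x hx⟩) (Fin.mk_lt_mk.mpr hcon)
    rw [List.idxOf_get, List.idxOf_get] at hlt
    linarith
  have hNb : l.idxOf b = l.length - 1 := by
    by_contra hcon
    have hlt : l.idxOf b < l.length - 1 := by
      have := hidxlt b hbP
      omega
    have hblt := hsortlt.rel_get_of_lt (a := ⟨l.idxOf b, hidxlt b hbP⟩)
      (b := ⟨l.length - 1, by omega⟩) (Fin.mk_lt_mk.mpr hlt)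
    rw [List.idxOf_get] at hblt
    exact absurd hblt (not_lt.mpr (hmemP _ (hgetP _ _)).2)
  have ha0 : l.idxOf a = 0 := by
    by_contra hcon
    have h0lt := hsortlt.rel_get_of_lt (a := ⟨0, hlen⟩)
      (b := ⟨l.idxOf a, hidxlt a haP⟩) (Fin.mk_lt_mk.mpr (Nat.pos_of_ne_zero hcon))
    rw [List.idxOf_get] at h0lt
    exact absurd h0lt (not_lt.mpr (hmemP _ (hgetP _ _)).1)
  have hwpart : IsPart a b (l.length - 1) w := by
    refine ⟨hwmono, ?_, fun k hk => ?_⟩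
    · have := hwidx a haP
      rwa [ha0] at this
    · by_cases h : k < l.length
      · have hk' : k = l.length - 1 := by omega
        rw [hk', ← hNb]
        exact hwidx b hbP
      · simp only [hw, dif_neg h]
  refine ⟨l.length - 1, w, fun i => l.idxOf (t (min i n)), fun i => l.idxOf (u (min i m)),
    hwpart, ?_, ?_, ?_, ?_, ?_, ?_, ?_, ?_⟩
  · intro i j hij
    exact hidxmono _ (htP _ (min_le_right _ _)) _ (htP _ (min_le_right _ _))
      (htp.1 (by omega))
  · simp only [Nat.zero_min]
    rw [htp.2.1, ha0]
  · simp only [min_self]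
    rw [htp.2.2 n le_rfl, hNb]
  · intro i hi
    simp only
    rw [min_eq_left hi]
    exact hwidx _ (htP i hi)
  · intro i j hij
    exact hidxmono _ (huP _ (min_le_right _ _)) _ (huP _ (min_le_right _ _))
      (hup.1 (by omega))
  · simp only [Nat.zero_min]
    rw [hup.2.1, ha0]
  · simp only [min_self]
    rw [hup.2.2 m le_rfl, hNb]
  · intro i hi
    simp only
    rw [min_eq_left hi]
    exact hwidx _ (huP i hi)


lemma oneside {T p q r K ε0 δ : ℝ} {X Y : ℝ → ℝ}
    (hp0 : 0 < p) (hq0 : 0 < q) (hr0 : 0 < r) (hpr : p < r)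
    (hθ1 : 1 ≤ 1 / r + 1 / q) (hK0 : 0 ≤ K)
    (hK : ∀ m : ℕ, ∑ k ∈ Finset.range m, (2 / ((k : ℝ) + 1)) ^ (1 / r + 1 / q) ≤ K)
    (hbXp : BddAbove (vset p 0 T X)) (hbYq : BddAbove (vset q 0 T Y))
    (hbXr : BddAbove (vset r 0 T X))
    (hε00 : 0 < ε0) (hδ0 : 0 < δ)
    (hδ : ∀ x ∈ Set.Icc (0:ℝ) T, ∀ y ∈ Set.Icc (0:ℝ) T, dist x y < δ → dist (X x) (X y) < ε0)
    {n m : ℕ} {t u : ℕ → ℝ} (htp : IsPart 0 T n t) (hup : IsPart 0 T m u)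
    {φ : ℕ → ℕ} (hφm : Monotone φ) (hφ0 : φ 0 = 0) (hφn : φ n = m)
    (hφt : ∀ i, i ≤ n → u (φ i) = t i)
    (hmesh : ∀ i < n, t (i + 1) - t i < δ) :
    |rs X Y m u - rs X Y n t| ≤
      K * ((ε0 ^ (r - p) * ctrl p 0 T X) ^ (1 / r) * ctrl q 0 T Y ^ (1 / q)) := by
  have hbXi : ∀ i, BddAbove (vset r (t i) (t (i + 1)) X) := fun i =>
    bddAbove_vset_sub hbXr (htp.left_le i) (htp.le_right _)
  have hbYi : ∀ i, BddAbove (vset q (t i) (t (i + 1)) Y) := fun i =>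
    bddAbove_vset_sub hbYq (htp.left_le i) (htp.le_right _)
  have href := rs_refine X Y hr0 hq0 hK0 hK htp hup hφm hφ0 hφn hφt hbXi hbYi
  refine le_trans href (mul_le_mul_of_nonneg_left ?_ hK0)
  have hctrlX0 : ∀ i, 0 ≤ ctrl r (t i) (t (i + 1)) X := fun i =>
    ctrl_nonneg (hbXi i) (htp.1 (Nat.le_succ i))
  have hctrlY0 : ∀ i, 0 ≤ ctrl q (t i) (t (i + 1)) Y := fun i =>
    ctrl_nonneg (hbYi i) (htp.1 (Nat.le_succ i))
  have hhold := holder_sum hr0 hq0 hθ1 (n := n)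
    (f := fun i => ctrl r (t i) (t (i + 1)) X ^ (1 / r))
    (g := fun i => ctrl q (t i) (t (i + 1)) Y ^ (1 / q))
    (fun i => Real.rpow_nonneg (hctrlX0 i) _) (fun i => Real.rpow_nonneg (hctrlY0 i) _)
  refine le_trans hhold ?_
  have hfr : ∀ i ∈ Finset.range n,
      (ctrl r (t i) (t (i + 1)) X ^ (1 / r)) ^ r = ctrl r (t i) (t (i + 1)) X := fun i _ => by
    rw [← Real.rpow_mul (hctrlX0 i), one_div_mul_cancel hr0.ne', Real.rpow_one]
  have hgq : ∀ i ∈ Finset.range n,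
      (ctrl q (t i) (t (i + 1)) Y ^ (1 / q)) ^ q = ctrl q (t i) (t (i + 1)) Y := fun i _ => by
    rw [← Real.rpow_mul (hctrlY0 i), one_div_mul_cancel hq0.ne', Real.rpow_one]
  rw [Finset.sum_congr rfl hfr, Finset.sum_congr rfl hgq]
  have hsumX0 : 0 ≤ ∑ i ∈ Finset.range n, ctrl r (t i) (t (i + 1)) X :=
    Finset.sum_nonneg fun i _ => hctrlX0 i
  have hsumY0 : 0 ≤ ∑ i ∈ Finset.range n, ctrl q (t i) (t (i + 1)) Y :=
    Finset.sum_nonneg fun i _ => hctrlY0 i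
  have hX1 : ∑ i ∈ Finset.range n, ctrl r (t i) (t (i + 1)) X
      ≤ ε0 ^ (r - p) * ctrl p 0 T X := by
    have hper : ∀ i ∈ Finset.range n, ctrl r (t i) (t (i + 1)) X
        ≤ ε0 ^ (r - p) * ctrl p (t i) (t (i + 1)) X := by
      intro i hi
      rw [Finset.mem_range] at hi
      refine csSup_le (vset_nonempty _ _ (htp.1 (Nat.le_succ i))) ?_
      rintro v ⟨n', t', hp', rfl⟩
      have hincr : ∀ j, |X (t' (j + 1)) - X (t' j)| ≤ ε0 := by
        intro j
        have h1 : t' j ∈ Set.Icc (0:ℝ) T :=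
          ⟨le_trans (htp.left_le i) (hp'.left_le j),
            le_trans (hp'.le_right j) (htp.le_right (i + 1))⟩
        have h2 : t' (j + 1) ∈ Set.Icc (0:ℝ) T :=
          ⟨le_trans (htp.left_le i) (hp'.left_le (j + 1)),
            le_trans (hp'.le_right (j + 1)) (htp.le_right (i + 1))⟩
        have h3 : dist (t' (j + 1)) (t' j) < δ := by
          rw [Real.dist_eq, abs_of_nonneg (sub_nonneg.mpr (hp'.1 (Nat.le_succ j)))]
          have hj1 : t i ≤ t' j := hp'.left_le j
          have hj2 : t' (j + 1) ≤ t (i + 1) := hp'.le_right (j + 1)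
          have := hmesh i hi
          linarith
        have h4 := hδ _ h2 _ h1 h3
        rw [Real.dist_eq] at h4
        exact h4.le
      refine le_trans (vsum_rpow_le hp0 hpr.le hε00.le hincr)
        (mul_le_mul_of_nonneg_left
          (le_ctrl (bddAbove_vset_sub hbXp (htp.left_le i) (htp.le_right (i + 1))) hp')
          (Real.rpow_nonneg hε00.le _))
    refine le_trans (Finset.sum_le_sum hper) ?_
    rw [← Finset.mul_sum]
    refine mul_le_mul_of_nonneg_left ?_ (Real.rpow_nonneg hε00.le _)
    have hchain := ctrl_chain hbXp htp.1 htp.left_le htp.le_right 0 n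
    rw [Nat.zero_add, htp.2.1, htp.2.2 n le_rfl] at hchain
    rw [Finset.range_eq_Ico]
    exact hchain
  have hY1 : ∑ i ∈ Finset.range n, ctrl q (t i) (t (i + 1)) Y ≤ ctrl q 0 T Y := by
    have hchain := ctrl_chain hbYq htp.1 htp.left_le htp.le_right 0 n
    rw [Nat.zero_add, htp.2.1, htp.2.2 n le_rfl] at hchain
    rw [Finset.range_eq_Ico]
    exact hchain
  exact mul_le_mul (Real.rpow_le_rpow hsumX0 hX1 (by positivity))
    (Real.rpow_le_rpow hsumY0 hY1 (by positivity))
    (Real.rpow_nonneg hsumY0 _)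
    (Real.rpow_nonneg (mul_nonneg (Real.rpow_nonneg hε00.le _)
      (ctrl_nonneg hbXp htp.le)) _)

end Young

lemma Young.bddAbove_vset_of_finite {p s T : ℝ} {X : ℝ → ℝ} (hp : 0 < p)
    (h : HasFinitePVar p s T X) : BddAbove (Young.vset p s T X) := by
  obtain ⟨C, hC⟩ := h
  refine ⟨(max C 0) ^ p, ?_⟩
  rintro v ⟨n, t, hpart, rfl⟩
  have hv0 : 0 ≤ Young.vsum p X n t := Young.vsum_nonneg _ _ _ _
  have hmem : (Young.vsum p X n t) ^ (1 / p) ∈ pVarSet p s T X :=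
    ⟨n, t, hpart.1, hpart.2.1, hpart.2.2, rfl⟩
  have h1 : (Young.vsum p X n t) ^ (1 / p) ≤ max C 0 := le_trans (hC hmem) (le_max_left _ _)
  have h2 : ((Young.vsum p X n t) ^ (1 / p)) ^ p ≤ (max C 0) ^ p :=
    Real.rpow_le_rpow (Real.rpow_nonneg hv0 _) h1 hp.le
  rwa [← Real.rpow_mul hv0, one_div_mul_cancel hp.ne', Real.rpow_one] at h2


open Young

/-- existence of the Young integral as a limit of left Riemann–Stieltjes sums. -/
theorem youngIntegral_exists (T : ℝ) (hT : 0 < T) (p q : ℝ) (hp : 1 ≤ p) (hq : 1 ≤ q)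
    (hpq : 1 / p + 1 / q > 1) (X Y : ℝ → ℝ)
    (hX : ContinuousOn X (Set.Icc 0 T)) (hY : ContinuousOn Y (Set.Icc 0 T))
    (hfX : HasFinitePVar p 0 T X) (hfY : HasFinitePVar q 0 T Y) :
    ∃ I : ℝ, IsYoungIntegral 0 T X Y I := by
  classical
  have hp0 : 0 < p := lt_of_lt_of_le one_pos hp
  have hq0 : 0 < q := lt_of_lt_of_le one_pos hq
  have hbXp : BddAbove (vset p 0 T X) := Young.bddAbove_vset_of_finite hp0 hfX
  have hbYq : BddAbove (vset q 0 T Y) := Young.bddAbove_vset_of_finite hq0 hfY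
  have hq1 : 1 / q ≤ 1 := by rw [div_le_one hq0]; exact hq
  have hp1 : 1 / p ≤ 1 := by rw [div_le_one hp0]; exact hp
  have hip : 0 < 1 / p := by positivity
  have hd0 : 0 < 1 / p + 1 - 1 / q := by linarith
  set r := 2 / (1 / p + 1 - 1 / q) with hrdef
  have hr0 : 0 < r := by positivity
  have hinvr : 1 / r = (1 / p + 1 - 1 / q) / 2 := by rw [hrdef, one_div_div]
  have hpr : p < r := by
    have h1 : 1 / r < 1 / p := by rw [hinvr]; linarith
    rw [div_lt_div_iff₀ hr0 hp0] at h1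
    linarith
  have hθ : 1 < 1 / r + 1 / q := by rw [hinvr]; linarith
  obtain ⟨K, hK0, hK⟩ := Young.exists_K hθ
  obtain ⟨M, hM⟩ := (isCompact_Icc (a := (0:ℝ)) (b := T)).exists_bound_of_continuousOn hX
  have hM' : ∀ x ∈ Set.Icc (0:ℝ) T, |X x| ≤ M := by
    intro x hx
    have := hM x hx
    rwa [Real.norm_eq_abs] at this
  have hM0 : 0 ≤ M := le_trans (abs_nonneg _) (hM' 0 (Set.left_mem_Icc.mpr hT.le))
  have hbXr : BddAbove (vset r 0 T X) := by
    refine ⟨(2 * M + 1) ^ (r - p) * ctrl p 0 T X, ?_⟩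
    rintro v ⟨n, t, hpart, rfl⟩
    have hincr : ∀ i, |X (t (i + 1)) - X (t i)| ≤ 2 * M + 1 := by
      intro i
      have h1 := hM' (t i) ⟨hpart.left_le i, hpart.le_right i⟩
      have h2 := hM' (t (i + 1)) ⟨hpart.left_le _, hpart.le_right _⟩
      have h3 : |X (t (i + 1)) - X (t i)| ≤ |X (t (i + 1))| + |X (t i)| := by
        rw [sub_eq_add_neg]
        refine le_trans (abs_add_le _ _) ?_
        rw [abs_neg]
      linarith
    refine le_trans (Young.vsum_rpow_le hp0 hpr.le (by linarith) hincr) ?_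
    exact mul_le_mul_of_nonneg_left (Young.le_ctrl hbXp hpart) (Real.rpow_nonneg (by linarith) _)
  have hucX := (isCompact_Icc (a := (0:ℝ)) (b := T)).uniformContinuousOn_of_continuous hX
  rw [Metric.uniformContinuousOn_iff] at hucX
  have pair : ∀ ε > (0:ℝ), ∃ δ > (0:ℝ), ∀ (n : ℕ) (t : ℕ → ℝ) (m : ℕ) (u : ℕ → ℝ),
      IsPart 0 T n t → IsPart 0 T m u →
      (∀ i < n, t (i + 1) - t i < δ) → (∀ i < m, u (i + 1) - u i < δ) →
      |rs X Y n t - rs X Y m u| ≤ ε := by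
    intro ε hε
    set C0 := K * (ctrl p 0 T X ^ (1 / r) * ctrl q 0 T Y ^ (1 / q)) with hC0
    have hCX0 : 0 ≤ ctrl p 0 T X := Young.ctrl_nonneg hbXp hT.le
    have hCY0 : 0 ≤ ctrl q 0 T Y := Young.ctrl_nonneg hbYq hT.le
    have hC00 : 0 ≤ C0 :=
      mul_nonneg hK0 (mul_nonneg (Real.rpow_nonneg hCX0 _) (Real.rpow_nonneg hCY0 _))
    have hα0 : 0 < (r - p) / r := div_pos (by linarith) hr0
    set ε0 := min 1 ((ε / (2 * (C0 + 1))) ^ (r / (r - p))) with hε0def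
    have hbase : (0:ℝ) < ε / (2 * (C0 + 1)) := div_pos hε (by linarith)
    have hε00 : 0 < ε0 := lt_min one_pos (Real.rpow_pos_of_pos hbase _)
    have hsmall : C0 * ε0 ^ ((r - p) / r) ≤ ε / 2 := by
      have h2 : ε0 ≤ (ε / (2 * (C0 + 1))) ^ (r / (r - p)) := min_le_right _ _
      have h3 := Real.rpow_le_rpow hε00.le h2 hα0.le
      have hexp : r / (r - p) * ((r - p) / r) = 1 := by
        rw [div_mul_div_comm, mul_comm]
        exact div_self (mul_pos (show (0:ℝ) < r - p by linarith) hr0).ne'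
      rw [← Real.rpow_mul hbase.le, hexp, Real.rpow_one] at h3
      have h10 : C0 + 1 ≠ 0 := (show (0:ℝ) < C0 + 1 by linarith).ne'
      have heq : (C0 + 1) * (ε / (2 * (C0 + 1))) = ε / 2 := by
        field_simp
      calc C0 * ε0 ^ ((r - p) / r) ≤ C0 * (ε / (2 * (C0 + 1))) :=
            mul_le_mul_of_nonneg_left h3 hC00
        _ ≤ (C0 + 1) * (ε / (2 * (C0 + 1))) :=
            mul_le_mul_of_nonneg_right (by linarith) hbase.le
        _ = ε / 2 := heq
    obtain ⟨δ, hδ0, hδ⟩ := hucX ε0 hε00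
    refine ⟨δ, hδ0, fun n t m u htp hup ht hu => ?_⟩
    obtain ⟨N, w, φ, ψ, hwp, hφm, hφ0, hφn, hφt, hψm, hψ0, hψn, hψt⟩ :=
      Young.common_refinement htp hup
    have h1 := Young.oneside hp0 hq0 hr0 hpr hθ.le hK0 hK hbXp hbYq hbXr hε00 hδ0 hδ
      htp hwp hφm hφ0 hφn hφt ht
    have h2 := Young.oneside hp0 hq0 hr0 hpr hθ.le hK0 hK hbXp hbYq hbXr hε00 hδ0 hδ
      hup hwp hψm hψ0 hψn hψt hu
    have hG : K * ((ε0 ^ (r - p) * ctrl p 0 T X) ^ (1 / r) * ctrl q 0 T Y ^ (1 / q))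
        ≤ ε / 2 := by
      have he : (ε0 ^ (r - p) * ctrl p 0 T X) ^ (1 / r)
          = ε0 ^ ((r - p) / r) * ctrl p 0 T X ^ (1 / r) := by
        rw [Real.mul_rpow (Real.rpow_nonneg hε00.le _) hCX0, ← Real.rpow_mul hε00.le,
          mul_one_div]
      rw [he]
      calc K * (ε0 ^ ((r - p) / r) * ctrl p 0 T X ^ (1 / r) * ctrl q 0 T Y ^ (1 / q))
          = C0 * ε0 ^ ((r - p) / r) := by rw [hC0]; ring
        _ ≤ ε / 2 := hsmall
    have habs : |rs X Y n t - rs X Y m u| ≤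
        |rs X Y N w - rs X Y n t| + |rs X Y N w - rs X Y m u| := by
      have h := abs_sub_le (rs X Y n t) (rs X Y N w) (rs X Y m u)
      rwa [abs_sub_comm (rs X Y n t) (rs X Y N w)] at h
    linarith [le_trans h1 hG, le_trans h2 hG]
  set pt : ℕ → ℕ → ℝ := fun k i => min ((i : ℝ) * (T / ((k : ℝ) + 1))) T with hpt
  have hc0 : ∀ k : ℕ, 0 ≤ T / ((k : ℝ) + 1) := fun k => by positivity
  have hptpart : ∀ k, IsPart 0 T (k + 1) (pt k) := by
    intro k
    refine ⟨monotone_nat_of_le_succ fun i => ?_, ?_, fun i hi => ?_⟩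
    · simp only [hpt]
      refine min_le_min (mul_le_mul_of_nonneg_right ?_ (hc0 k)) le_rfl
      exact_mod_cast Nat.le_succ i
    · simp only [hpt]
      rw [Nat.cast_zero, zero_mul, min_eq_left hT.le]
    · simp only [hpt]
      have hle : ((k : ℝ) + 1) ≤ (i : ℝ) := by exact_mod_cast hi
      have h1 : T ≤ (i : ℝ) * (T / ((k : ℝ) + 1)) := by
        calc T = ((k : ℝ) + 1) * (T / ((k : ℝ) + 1)) := by field_simp
          _ ≤ (i : ℝ) * (T / ((k : ℝ) + 1)) := mul_le_mul_of_nonneg_right hle (hc0 k)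
      rw [min_eq_right h1]
  have hptmesh : ∀ k i, pt k (i + 1) - pt k i ≤ T / ((k : ℝ) + 1) := by
    intro k i
    simp only [hpt]
    rcases le_total ((i : ℝ) * (T / ((k : ℝ) + 1))) T with h | h
    · rw [min_eq_left h]
      have hmin := min_le_left (((i + 1 : ℕ) : ℝ) * (T / ((k : ℝ) + 1))) T
      have heq : ((i + 1 : ℕ) : ℝ) * (T / ((k : ℝ) + 1))
          = (i : ℝ) * (T / ((k : ℝ) + 1)) + T / ((k : ℝ) + 1) := by
        push_cast
        ring
      linarith
    · have h' : T ≤ ((i + 1 : ℕ) : ℝ) * (T / ((k : ℝ) + 1)) := by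
        refine le_trans h (mul_le_mul_of_nonneg_right ?_ (hc0 k))
        push_cast
        linarith
      rw [min_eq_right h, min_eq_right h']
      simpa using hc0 k
  set F : ℕ → ℝ := fun k => rs X Y (k + 1) (pt k) with hF
  have hmesh_of : ∀ δ : ℝ, 0 < δ → ∀ k : ℕ, T / δ < (k : ℝ) + 1 →
      ∀ i, pt k (i + 1) - pt k i < δ := by
    intro δ hδ0 k hk i
    refine lt_of_le_of_lt (hptmesh k i) ?_
    rw [div_lt_iff₀ (by positivity : (0:ℝ) < (k : ℝ) + 1)]
    rw [div_lt_iff₀ hδ0] at hk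
    calc T < ((k : ℝ) + 1) * δ := hk
      _ = δ * ((k : ℝ) + 1) := mul_comm _ _
  have hcauchy : CauchySeq F := by
    rw [Metric.cauchySeq_iff]
    intro ε hε
    obtain ⟨δ, hδ0, hpair⟩ := pair (ε / 2) (by linarith)
    obtain ⟨k0, hk0⟩ := exists_nat_gt (T / δ)
    have hcast : ∀ k : ℕ, k0 ≤ k → T / δ < (k : ℝ) + 1 := by
      intro k hk
      refine lt_of_lt_of_le hk0 ?_
      have : (k0 : ℝ) ≤ (k : ℝ) := by exact_mod_cast hk
      linarith
    refine ⟨k0, fun k1 hk1 k2 hk2 => ?_⟩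
    rw [Real.dist_eq]
    exact lt_of_le_of_lt (hpair _ _ _ _ (hptpart k1) (hptpart k2)
      (fun i _ => hmesh_of δ hδ0 k1 (hcast k1 hk1) i)
      (fun i _ => hmesh_of δ hδ0 k2 (hcast k2 hk2) i)) (by linarith)
  obtain ⟨I, hI⟩ := cauchySeq_tendsto_of_complete hcauchy
  refine ⟨I, ?_⟩
  intro ε hε
  obtain ⟨δ, hδ0, hpair⟩ := pair (ε / 2) (by linarith)
  refine ⟨δ, hδ0, fun n t hmono ht0 htend hmesh => ?_⟩
  have htpart : IsPart 0 T n t := ⟨hmono, ht0, htend⟩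
  rw [Metric.tendsto_atTop] at hI
  obtain ⟨N0, hN0⟩ := hI (ε / 4) (by linarith)
  obtain ⟨k0, hk0⟩ := exists_nat_gt (T / δ)
  set k := max N0 k0 with hk
  have hcast : T / δ < (k : ℝ) + 1 := by
    refine lt_of_lt_of_le hk0 ?_
    have : (k0 : ℝ) ≤ (k : ℝ) := by exact_mod_cast le_max_right N0 k0
    linarith
  have hFk : |F k - I| < ε / 4 := by
    have := hN0 k (le_max_left _ _)
    rwa [Real.dist_eq] at this
  have h2 : |rs X Y n t - F k| ≤ ε / 2 :=
    hpair n t (k + 1) (pt k) htpart (hptpart k) hmesh (fun i _ => hmesh_of δ hδ0 k hcast i)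
  have habs : |rs X Y n t - I| ≤ |rs X Y n t - F k| + |F k - I| := abs_sub_le _ _ _
  have hgoal : |rs X Y n t - I| < ε := by linarith
  exact hgoal
end

section
/- Let p, q ≥ 1 with 1/p + 1/q > 1, X of finite p-variation and Y of finite q-variation on [0,T]. There is a constant c depending only on p and q such that the Young integral path t ↦ ∫_0^t X_s dY_s satisfies ‖∫ X dY‖_{q-var;[0,T]} ≤ c (|X_0| + ‖X‖_{p-var;[0,T]}) ‖Y‖_{q-var;[0,T]}. -/
open Finset Set

namespace YoungAux

/-- two-point step partition -/
def stepF (c d : ℝ) : ℕ → ℝ := fun i => if i = 0 then c else d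

lemma stepF_mono {c d : ℝ} (h : c ≤ d) : Monotone (stepF c d) := by
  apply monotone_nat_of_le_succ
  intro i
  rcases Nat.eq_zero_or_pos i with rfl | hi
  · simpa [stepF] using h
  · simp [stepF, hi.ne', Nat.succ_ne_zero]

lemma stepF_zero (c d : ℝ) : stepF c d 0 = c := by simp [stepF]

lemma stepF_pos (c d : ℝ) : ∀ i ≥ 1, stepF c d i = d := by
  intro i hi; simp [stepF, (Nat.one_le_iff_ne_zero.mp hi)]

/-- raw p-th power variation sums -/
def rawSet (p a b : ℝ) (X : ℝ → ℝ) : Set ℝ :=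
  { v | ∃ (n : ℕ) (t : ℕ → ℝ), Monotone t ∧ t 0 = a ∧ (∀ i ≥ n, t i = b) ∧
      v = ∑ i ∈ Finset.range n, |X (t (i + 1)) - X (t i)| ^ p }

noncomputable def V (p a b : ℝ) (X : ℝ → ℝ) : ℝ := sSup (rawSet p a b X)

lemma part_le {n : ℕ} {t : ℕ → ℝ} {b : ℝ} (ht : Monotone t) (htn : ∀ i ≥ n, t i = b) (i : ℕ) :
    t i ≤ b := by
  calc t i ≤ t (max i n) := ht (le_max_left _ _)
  _ = b := htn _ (le_max_right _ _)

lemma part_mem {n : ℕ} {t : ℕ → ℝ} {a b : ℝ} (ht : Monotone t) (ht0 : t 0 = a)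
    (htn : ∀ i ≥ n, t i = b) (i : ℕ) : a ≤ t i ∧ t i ≤ b :=
  ⟨ht0 ▸ ht (Nat.zero_le i), part_le ht htn i⟩

lemma rawSet_nonneg {p a b : ℝ} {X : ℝ → ℝ} {x : ℝ} (hx : x ∈ rawSet p a b X) : 0 ≤ x := by
  obtain ⟨n, t, _, _, _, rfl⟩ := hx
  exact Finset.sum_nonneg fun i _ => Real.rpow_nonneg (abs_nonneg _) _

lemma singleton_mem {p a b : ℝ} (X : ℝ → ℝ) (hab : a ≤ b) :
    |X b - X a| ^ p ∈ rawSet p a b X := by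
  refine ⟨1, stepF a b, stepF_mono hab, stepF_zero a b, stepF_pos a b, ?_⟩
  simp [stepF]

lemma rawSet_nonempty {p a b : ℝ} (X : ℝ → ℝ) (hab : a ≤ b) : (rawSet p a b X).Nonempty :=
  ⟨_, singleton_mem X hab⟩

/-- concatenation of partitions -/
lemma concat {a b c : ℝ} {n m : ℕ} {t u : ℕ → ℝ}
    (ht : Monotone t) (ht0 : t 0 = a) (htn : ∀ i ≥ n, t i = b)
    (hu : Monotone u) (hu0 : u 0 = b) (hum : ∀ i ≥ m, u i = c) :
    ∃ w : ℕ → ℝ, Monotone w ∧ w 0 = a ∧ (∀ i ≥ n + m, w i = c) ∧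
      (∀ F : ℝ → ℝ → ℝ, ∑ i ∈ Finset.range (n + m), F (w i) (w (i+1)) =
        ∑ i ∈ Finset.range n, F (t i) (t (i+1)) + ∑ i ∈ Finset.range m, F (u i) (u (i+1))) ∧
      (∀ δ : ℝ, (∀ i < n, t (i+1) - t i < δ) → (∀ i < m, u (i+1) - u i < δ) →
        ∀ i < n + m, w (i+1) - w i < δ) := by
  set w : ℕ → ℝ := fun i => if i ≤ n then t i else u (i - n) with hw
  have hwt : ∀ i ≤ n, w i = t i := fun i hi => if_pos hi
  have hwu : ∀ i, w (n + i) = u i := by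
    intro i
    rcases Nat.eq_zero_or_pos i with rfl | hi
    · simp [hw, htn n le_rfl, hu0.symm]
    · have h1 : ¬ (n + i ≤ n) := by omega
      have h2 : n + i - n = i := by omega
      simp [hw, h1, h2]
  have hstep : ∀ i, w i ≤ w (i+1) := by
    intro i
    rcases lt_or_ge i n with h | h
    · rw [hwt i (le_of_lt h), hwt (i+1) h]
      exact ht (Nat.le_succ i)
    · obtain ⟨j, rfl⟩ := Nat.exists_eq_add_of_le h
      rw [hwu j, show n + j + 1 = n + (j+1) from rfl, hwu (j+1)]
      exact hu (Nat.le_succ j)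
  refine ⟨w, monotone_nat_of_le_succ hstep, by simpa [hw] using ht0, ?_, ?_, ?_⟩
  · intro i hi
    obtain ⟨j, rfl⟩ := Nat.exists_eq_add_of_le (le_trans (Nat.le_add_right n m) hi)
    rw [hwu j]; exact hum j (by omega)
  · intro F
    rw [Finset.sum_range_add]
    congr 1
    · apply Finset.sum_congr rfl
      intro i hi
      rw [Finset.mem_range] at hi
      rw [hwt i (le_of_lt hi), hwt (i+1) hi]
    · apply Finset.sum_congr rfl
      intro i _
      rw [show n + i + 1 = n + (i+1) from rfl, hwu i, hwu (i+1)]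
  · intro δ h1 h2 i hi
    rcases lt_or_ge i n with h | h
    · rw [hwt i (le_of_lt h), hwt (i+1) h]; exact h1 i h
    · obtain ⟨j, rfl⟩ := Nat.exists_eq_add_of_le h
      rw [hwu j, show n + j + 1 = n + (j+1) from rfl, hwu (j+1)]
      exact h2 j (by omega)

lemma extend {p a b a' b' : ℝ} {X : ℝ → ℝ} (ha : a' ≤ a) (hb : b ≤ b') {x : ℝ}
    (hx : x ∈ rawSet p a b X) : ∃ y ∈ rawSet p a' b' X, x ≤ y := by
  obtain ⟨n, t, ht, ht0, htn, rfl⟩ := hx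
  obtain ⟨w, hw, hw0, hwn, hwsum, -⟩ :=
    concat (stepF_mono ha) (stepF_zero a' a) (stepF_pos a' a) ht ht0 htn
  obtain ⟨v, hv, hv0, hvn, hvsum, -⟩ :=
    concat hw hw0 hwn (stepF_mono hb) (stepF_zero b b') (stepF_pos b b')
  refine ⟨_, ⟨1 + n + 1, v, hv, hv0, hvn, rfl⟩, ?_⟩
  have e1 := hvsum (fun x y => |X y - X x| ^ p)
  have e2 := hwsum (fun x y => |X y - X x| ^ p)
  have h1 : (0:ℝ) ≤ ∑ i ∈ Finset.range 1, |X (stepF a' a (i+1)) - X (stepF a' a i)| ^ p :=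
    Finset.sum_nonneg fun i _ => Real.rpow_nonneg (abs_nonneg _) _
  have h2 : (0:ℝ) ≤ ∑ i ∈ Finset.range 1, |X (stepF b b' (i+1)) - X (stepF b b' i)| ^ p :=
    Finset.sum_nonneg fun i _ => Real.rpow_nonneg (abs_nonneg _) _
  rw [e1, e2]
  linarith

lemma bdd_sub {p a b a' b' : ℝ} {X : ℝ → ℝ} (ha : a' ≤ a) (hb : b ≤ b')
    (hB : BddAbove (rawSet p a' b' X)) : BddAbove (rawSet p a b X) := by
  obtain ⟨K, hK⟩ := hB
  refine ⟨K, fun x hx => ?_⟩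
  obtain ⟨y, hy, hxy⟩ := extend ha hb hx
  exact le_trans hxy (hK hy)

lemma V_nonneg {p a b : ℝ} {X : ℝ → ℝ} (hab : a ≤ b) (hB : BddAbove (rawSet p a b X)) :
    0 ≤ V p a b X :=
  le_trans (rawSet_nonneg (singleton_mem X hab)) (le_csSup hB (singleton_mem X hab))

lemma V_mono {p a b a' b' : ℝ} {X : ℝ → ℝ} (ha : a' ≤ a) (hab : a ≤ b) (hb : b ≤ b')
    (hB : BddAbove (rawSet p a' b' X)) : V p a b X ≤ V p a' b' X := by
  apply csSup_le (rawSet_nonempty X hab)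
  intro x hx
  obtain ⟨y, hy, hxy⟩ := extend ha hb hx
  exact le_trans hxy (le_csSup hB hy)

lemma abs_rpow_le_V {p a b : ℝ} {X : ℝ → ℝ} (hab : a ≤ b) (hB : BddAbove (rawSet p a b X)) :
    |X b - X a| ^ p ≤ V p a b X := le_csSup hB (singleton_mem X hab)

lemma V_superadd {p a b c : ℝ} {X : ℝ → ℝ} (hab : a ≤ b) (hbc : b ≤ c)
    (hB : BddAbove (rawSet p a c X)) : V p a b X + V p b c X ≤ V p a c X := by
  have h1 : V p a b X ≤ V p a c X - V p b c X := by
    apply csSup_le (rawSet_nonempty X hab)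
    intro x hx
    rw [le_sub_iff_add_le]
    have h2 : V p b c X ≤ V p a c X - x := by
      apply csSup_le (rawSet_nonempty X hbc)
      intro y hy
      rw [le_sub_iff_add_le]
      obtain ⟨n, t, ht, ht0, htn, rfl⟩ := hx
      obtain ⟨m, u, hu, hu0, hum, rfl⟩ := hy
      obtain ⟨w, hw, hw0, hwn, hwsum, -⟩ := concat ht ht0 htn hu hu0 hum
      have e := hwsum (fun x y => |X y - X x| ^ p)
      rw [add_comm, ← e]
      exact le_csSup hB ⟨n + m, w, hw, hw0, hwn, rfl⟩
    linarith
  linarith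

end YoungAux
namespace YoungAux

section Abstract

variable {a b : ℝ} {ω : ℝ → ℝ → ℝ}

/-- interval monotonicity from superadditivity + nonnegativity -/
lemma omega_mono
    (hω0 : ∀ u v, a ≤ u → u ≤ v → v ≤ b → 0 ≤ ω u v)
    (hωadd : ∀ u v w, a ≤ u → u ≤ v → v ≤ w → w ≤ b → ω u v + ω v w ≤ ω u w)
    {u v : ℝ} (hu : a ≤ u) (huv : u ≤ v) (hv : v ≤ b) : ω u v ≤ ω a b := by
  have h1 := hωadd a u v le_rfl hu huv hv
  have h2 := hωadd a v b le_rfl (le_trans hu huv) hv le_rfl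
  have h3 := hω0 a u le_rfl hu (le_trans huv hv)
  have h4 := hω0 v b (le_trans hu huv) hv le_rfl
  linarith

lemma chain
    (hω0 : ∀ u v, a ≤ u → u ≤ v → v ≤ b → 0 ≤ ω u v)
    (hωadd : ∀ u v w, a ≤ u → u ≤ v → v ≤ w → w ≤ b → ω u v + ω v w ≤ ω u w)
    (s : ℕ → ℝ) (hs : Monotone s) (hmem : ∀ j, a ≤ s j ∧ s j ≤ b) :
    ∀ m : ℕ, ∑ j ∈ Finset.range m, ω (s j) (s (j+1)) ≤ ω (s 0) (s m) := by
  intro m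
  induction m with
  | zero => simp [hω0 (s 0) (s 0) (hmem 0).1 le_rfl (hmem 0).2]
  | succ m ih =>
    rw [Finset.sum_range_succ]
    have := hωadd (s 0) (s m) (s (m+1)) (hmem 0).1 (hs (Nat.zero_le m)) (hs (Nat.le_succ m))
      (hmem (m+1)).2
    linarith

lemma chain_le
    (hω0 : ∀ u v, a ≤ u → u ≤ v → v ≤ b → 0 ≤ ω u v)
    (hωadd : ∀ u v w, a ≤ u → u ≤ v → v ≤ w → w ≤ b → ω u v + ω v w ≤ ω u w)
    (s : ℕ → ℝ) (hs : Monotone s) (hmem : ∀ j, a ≤ s j ∧ s j ≤ b) (m : ℕ) :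
    ∑ j ∈ Finset.range m, ω (s j) (s (j+1)) ≤ ω a b :=
  le_trans (chain hω0 hωadd s hs hmem m)
    (omega_mono hω0 hωadd (hmem 0).1 (hs (Nat.zero_le m)) (hmem m).2)

lemma exists_good_index
    (hω0 : ∀ u v, a ≤ u → u ≤ v → v ≤ b → 0 ≤ ω u v)
    (hωadd : ∀ u v w, a ≤ u → u ≤ v → v ≤ w → w ≤ b → ω u v + ω v w ≤ ω u w)
    {n : ℕ} (hn : 2 ≤ n) {t : ℕ → ℝ} (ht : Monotone t) (ht0 : t 0 = a)
    (htn : ∀ i ≥ n, t i = b) :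
    ∃ i : ℕ, 1 ≤ i ∧ i + 1 ≤ n ∧ ω (t (i-1)) (t (i+1)) ≤ 2 * ω a b / ((n:ℝ) - 1) := by
  set m := n / 2 with hm
  have hm1 : 1 ≤ m := by omega
  have hmem : ∀ j, a ≤ t (2*j) ∧ t (2*j) ≤ b := fun j => part_mem ht ht0 htn _
  have hsum : ∑ j ∈ Finset.range m, ω (t (2*j)) (t (2*(j+1))) ≤ ω a b :=
    chain_le hω0 hωadd (fun j => t (2*j)) (ht.comp (fun i j h => by omega)) hmem m
  have hex : ∃ j < m, ω (t (2*j)) (t (2*(j+1))) ≤ ω a b / m := by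
    by_contra hc
    push_neg at hc
    have hlt : ∑ j ∈ Finset.range m, ω a b / (m:ℝ) <
        ∑ j ∈ Finset.range m, ω (t (2*j)) (t (2*(j+1))) := by
      apply Finset.sum_lt_sum_of_nonempty
      · exact Finset.nonempty_range_iff.mpr (by omega)
      · intro j hj
        exact hc j (Finset.mem_range.mp hj)
    rw [Finset.sum_const, Finset.card_range, nsmul_eq_mul] at hlt
    have hm0 : (m:ℝ) ≠ 0 := Nat.cast_ne_zero.mpr (by omega)
    rw [mul_div_cancel₀ _ hm0] at hlt
    linarith
  obtain ⟨j, hjm, hj⟩ := hex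
  refine ⟨2*j+1, by omega, by omega, ?_⟩
  have e1 : 2*j+1-1 = 2*j := by omega
  have e2 : 2*j+1+1 = 2*(j+1) := by omega
  rw [e1, e2]
  have hab : a ≤ b := ht0 ▸ part_le ht htn 0
  have hωab : 0 ≤ ω a b := hω0 a b le_rfl hab le_rfl
  have hmr : (n:ℝ) - 1 ≤ 2 * m := by
    have h : (n:ℝ) ≤ 2 * (m:ℝ) + 1 := by exact_mod_cast (show n ≤ 2*m+1 by omega)
    linarith
  have hmpos : (0:ℝ) < m := by positivity
  have hn1 : (0:ℝ) < (n:ℝ) - 1 := by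
    have : (2:ℝ) ≤ n := by exact_mod_cast hn
    linarith
  calc ω (t (2*j)) (t (2*(j+1))) ≤ ω a b / m := hj
  _ ≤ 2 * ω a b / ((n:ℝ) - 1) := by
      rw [div_le_div_iff₀ hmpos hn1]
      nlinarith

/-- removal of one interior point from a Riemann-type sum -/
lemma sum_remove (F : ℝ → ℝ → ℝ) (t : ℕ → ℝ) (k m : ℕ) :
    ∑ j ∈ Finset.range (k+2+m), F (t j) (t (j+1)) =
      (∑ j ∈ Finset.range (k+1+m),
        F (t (if j < k+1 then j else j+1)) (t (if j+1 < k+1 then j+1 else j+2)))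
      + (F (t k) (t (k+1)) + F (t (k+1)) (t (k+2)) - F (t k) (t (k+2))) := by
  have R1 : ∑ j ∈ Finset.range k,
      F (t (if j < k+1 then j else j+1)) (t (if j+1 < k+1 then j+1 else j+2)) =
      ∑ j ∈ Finset.range k, F (t j) (t (j+1)) := by
    apply Finset.sum_congr rfl
    intro j hj
    rw [Finset.mem_range] at hj
    rw [if_pos (by omega), if_pos (by omega)]
  have R3 : ∑ j ∈ Finset.range m,
      F (t (if k+1+j < k+1 then k+1+j else k+1+j+1)) (t (if k+1+j+1 < k+1 then k+1+j+1 else k+1+j+2)) =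
      ∑ j ∈ Finset.range m, F (t (k+2+j)) (t (k+2+j+1)) := by
    apply Finset.sum_congr rfl
    intro j _
    rw [if_neg (by omega), if_neg (by omega)]
    congr 2 <;> omega
  have L : ∑ j ∈ Finset.range (k+2+m), F (t j) (t (j+1)) =
      (∑ j ∈ Finset.range k, F (t j) (t (j+1))) + F (t k) (t (k+1)) + F (t (k+1)) (t (k+2))
      + ∑ j ∈ Finset.range m, F (t (k+2+j)) (t (k+2+j+1)) := by
    rw [Finset.sum_range_add, Finset.sum_range_succ, Finset.sum_range_succ]
    try ring
  rw [L, Finset.sum_range_add, Finset.sum_range_succ, R1, R3, if_pos (by omega : k < k+1),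
    if_neg (by omega : ¬ (k+1 < k+1))]
  try ring

end Abstract

end YoungAux

namespace YoungAux

section Abstract2

variable {a b : ℝ} {ω : ℝ → ℝ → ℝ} {X Y : ℝ → ℝ} {θ A B : ℝ}

lemma young_loeve_abstract
    (hθ : 1 < θ) (hAB : 0 ≤ A * B)
    (hω0 : ∀ u v, a ≤ u → u ≤ v → v ≤ b → 0 ≤ ω u v)
    (hωadd : ∀ u v w, a ≤ u → u ≤ v → v ≤ w → w ≤ b → ω u v + ω v w ≤ ω u w)
    (hXY : ∀ u v w, a ≤ u → u ≤ v → v ≤ w → w ≤ b →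
      |X v - X u| * |Y w - Y v| ≤ A * B * ω u w ^ θ) :
    ∀ n : ℕ, ∀ t : ℕ → ℝ, Monotone t → t 0 = a → (∀ i ≥ n, t i = b) →
      |(∑ i ∈ Finset.range n, X (t i) * (Y (t (i+1)) - Y (t i))) - X a * (Y b - Y a)| ≤
        A * B * ∑ k ∈ Finset.range (n-1), (2 * ω a b / ((k:ℝ)+1)) ^ θ := by
  intro n
  induction n using Nat.strong_induction_on with
  | _ n IH =>
  intro t ht ht0 htn
  rcases Nat.lt_or_ge n 2 with h2 | h2
  · interval_cases n
    · have hab : a = b := by rw [← ht0, htn 0 le_rfl]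
      simp [hab]
    · have h1 : t 1 = b := htn 1 le_rfl
      simp [Finset.sum_range_one, ht0, h1]
  · obtain ⟨i, hi1, hin, hωi⟩ := exists_good_index hω0 hωadd h2 ht ht0 htn
    set k := i - 1 with hk
    have hik : i = k + 1 := by omega
    obtain ⟨m, hnm⟩ : ∃ m, n = k + 2 + m := ⟨n - (k+2), by omega⟩
    set t' : ℕ → ℝ := fun j => t (if j < k+1 then j else j+1) with ht'def
    have ht' : Monotone t' := by
      have hidx : Monotone (fun j => if j < k+1 then j else j+1) := by
        intro x y hxy
        dsimp only
        split_ifs <;> omega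
      exact ht.comp hidx
    have ht'0 : t' 0 = a := by
      simp only [ht'def, if_pos (by omega : 0 < k+1)]
      exact ht0
    have ht'n : ∀ j ≥ n - 1, t' j = b := by
      intro j hj
      simp only [ht'def, if_neg (by omega : ¬ j < k+1)]
      exact htn (j+1) (by omega)
    have hIH := IH (n-1) (by omega) t' ht' ht'0 ht'n
    have e3 : n - 1 - 1 = n - 2 := by omega
    rw [e3] at hIH
    have hrem := sum_remove (fun x y => X x * (Y y - Y x)) t k m
    have hsum_eq : ∑ j ∈ Finset.range n, X (t j) * (Y (t (j+1)) - Y (t j)) =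
        (∑ j ∈ Finset.range (n-1), X (t' j) * (Y (t' (j+1)) - Y (t' j)))
        + (X (t k) * (Y (t (k+1)) - Y (t k)) + X (t (k+1)) * (Y (t (k+2)) - Y (t (k+1)))
           - X (t k) * (Y (t (k+2)) - Y (t k))) := by
      have e1 : n = k + 2 + m := hnm
      have e2 : n - 1 = k + 1 + m := by omega
      rw [e2, e1]
      exact hrem
    have hcorr : |X (t k) * (Y (t (k+1)) - Y (t k)) + X (t (k+1)) * (Y (t (k+2)) - Y (t (k+1)))
        - X (t k) * (Y (t (k+2)) - Y (t k))|
        ≤ A * B * (2 * ω a b / ((n:ℝ) - 1)) ^ θ := by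
      have heq : X (t k) * (Y (t (k+1)) - Y (t k)) + X (t (k+1)) * (Y (t (k+2)) - Y (t (k+1)))
          - X (t k) * (Y (t (k+2)) - Y (t k))
          = (X (t (k+1)) - X (t k)) * (Y (t (k+2)) - Y (t (k+1))) := by ring
      rw [heq, abs_mul]
      have hm1 := part_mem ht ht0 htn k
      have hm3 := part_mem ht ht0 htn (k+2)
      have hb1 := hXY (t k) (t (k+1)) (t (k+2)) hm1.1 (ht (by omega)) (ht (by omega)) hm3.2
      have hω' : ω (t k) (t (k+2)) ≤ 2 * ω a b / ((n:ℝ) - 1) := by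
        have h := hωi
        rw [hik] at h
        exact h
      have hrp : ω (t k) (t (k+2)) ^ θ ≤ (2 * ω a b / ((n:ℝ) - 1)) ^ θ :=
        Real.rpow_le_rpow (hω0 _ _ hm1.1 (ht (by omega)) hm3.2) hω' (by linarith)
      calc |X (t (k+1)) - X (t k)| * |Y (t (k+2)) - Y (t (k+1))|
          ≤ A * B * ω (t k) (t (k+2)) ^ θ := hb1
        _ ≤ A * B * (2 * ω a b / ((n:ℝ) - 1)) ^ θ := mul_le_mul_of_nonneg_left hrp hAB
    have hcast : ((n-2:ℕ):ℝ) + 1 = (n:ℝ) - 1 := by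
      have h : ((n-2:ℕ):ℝ) = (n:ℝ) - 2 := by
        push_cast [Nat.cast_sub h2]
        ring
      rw [h]; ring
    have hsplit : ∑ j ∈ Finset.range (n-1), (2 * ω a b / ((j:ℝ)+1)) ^ θ =
        (∑ j ∈ Finset.range (n-2), (2 * ω a b / ((j:ℝ)+1)) ^ θ)
        + (2 * ω a b / ((n:ℝ) - 1)) ^ θ := by
      have e : n - 1 = (n - 2) + 1 := by omega
      rw [e, Finset.sum_range_succ, hcast]
    have key : (∑ j ∈ Finset.range n, X (t j) * (Y (t (j+1)) - Y (t j))) - X a * (Y b - Y a)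
        = ((∑ j ∈ Finset.range (n-1), X (t' j) * (Y (t' (j+1)) - Y (t' j))) - X a * (Y b - Y a))
        + (X (t k) * (Y (t (k+1)) - Y (t k)) + X (t (k+1)) * (Y (t (k+2)) - Y (t (k+1)))
           - X (t k) * (Y (t (k+2)) - Y (t k))) := by
      rw [hsum_eq]; ring
    calc |(∑ i ∈ Finset.range n, X (t i) * (Y (t (i+1)) - Y (t i))) - X a * (Y b - Y a)|
        ≤ |(∑ j ∈ Finset.range (n-1), X (t' j) * (Y (t' (j+1)) - Y (t' j))) - X a * (Y b - Y a)|
          + |X (t k) * (Y (t (k+1)) - Y (t k)) + X (t (k+1)) * (Y (t (k+2)) - Y (t (k+1)))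
             - X (t k) * (Y (t (k+2)) - Y (t k))| := by
          rw [key]; exact abs_add_le _ _
      _ ≤ (A * B * ∑ j ∈ Finset.range (n-2), (2 * ω a b / ((j:ℝ)+1)) ^ θ)
          + A * B * (2 * ω a b / ((n:ℝ) - 1)) ^ θ := add_le_add hIH hcorr
      _ = A * B * ∑ j ∈ Finset.range (n-1), (2 * ω a b / ((j:ℝ)+1)) ^ θ := by
          rw [hsplit]; ring

end Abstract2

end YoungAux

namespace YoungAux

/-- the Young constant -/
noncomputable def CC (θ : ℝ) : ℝ := 4 ^ θ * ∑' k : ℕ, 1 / ((k:ℝ)+1) ^ θ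

lemma CC_nonneg (θ : ℝ) : 0 ≤ CC θ :=
  mul_nonneg (Real.rpow_nonneg (by norm_num) _)
    (tsum_nonneg fun k => by positivity)

lemma sum_le_CC {θ : ℝ} (hθ : 1 < θ) (N : ℕ) :
    ∑ k ∈ Finset.range N, (4 / ((k:ℝ)+1)) ^ θ ≤ CC θ := by
  have hsummable : Summable (fun k : ℕ => 1 / ((k:ℝ)+1) ^ θ) := by
    have h1 := Real.summable_one_div_nat_rpow.mpr hθ
    have h2 := (summable_nat_add_iff 1).mpr h1
    simpa using h2
  have heach : ∀ k : ℕ, (4 / ((k:ℝ)+1)) ^ θ = 4 ^ θ * (1 / ((k:ℝ)+1) ^ θ) := by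
    intro k
    rw [Real.div_rpow (by norm_num) (by positivity), div_eq_mul_one_div]
  calc ∑ k ∈ Finset.range N, (4 / ((k:ℝ)+1)) ^ θ
      = 4 ^ θ * ∑ k ∈ Finset.range N, 1 / ((k:ℝ)+1) ^ θ := by
        rw [Finset.mul_sum]
        exact Finset.sum_congr rfl fun k _ => heach k
    _ ≤ 4 ^ θ * ∑' k : ℕ, 1 / ((k:ℝ)+1) ^ θ := by
        apply mul_le_mul_of_nonneg_left _ (Real.rpow_nonneg (by norm_num) _)
        exact Summable.sum_le_tsum _ (fun i _ => by positivity) hsummable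
    _ = CC θ := rfl

lemma abs_le_V_rpow {p u v : ℝ} {X : ℝ → ℝ} (hp : 0 < p) (huv : u ≤ v)
    (hB : BddAbove (rawSet p u v X)) : |X v - X u| ≤ V p u v X ^ (1/p) := by
  have h := abs_rpow_le_V (X := X) huv hB
  have h2 := Real.rpow_le_rpow (Real.rpow_nonneg (abs_nonneg _) p) h
    (le_of_lt (by positivity : (0:ℝ) < 1/p))
  rw [one_div, Real.rpow_rpow_inv (abs_nonneg _) hp.ne'] at h2
  rwa [one_div]

/-- the concrete Young–Lóeve estimate for arbitrary partitions -/
lemma young_loeve {p q : ℝ} (hp : 1 ≤ p) (hq : 1 ≤ q) (hpq : 1 < 1/p + 1/q)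
    {T : ℝ} {X Y : ℝ → ℝ} (hBX : BddAbove (rawSet p 0 T X)) (hBY : BddAbove (rawSet q 0 T Y))
    {a b : ℝ} (ha : 0 ≤ a) (hab : a ≤ b) (hb : b ≤ T)
    {n : ℕ} {t : ℕ → ℝ} (ht : Monotone t) (ht0 : t 0 = a) (htn : ∀ i ≥ n, t i = b) :
    |(∑ i ∈ Finset.range n, X (t i) * (Y (t (i+1)) - Y (t i))) - X a * (Y b - Y a)| ≤
      CC (1/p + 1/q) * V p a b X ^ (1/p) * V q a b Y ^ (1/q) := by
  have hp0 : 0 < p := lt_of_lt_of_le one_pos hp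
  have hq0 : 0 < q := lt_of_lt_of_le one_pos hq
  set θ := 1/p + 1/q with hθdef
  have hθ1 : 1 < θ := hpq
  have hθ0 : 0 < θ := lt_trans one_pos hθ1
  -- bddness on all subintervals of [0,T]
  have hbddX : ∀ u v : ℝ, 0 ≤ u → v ≤ T → BddAbove (rawSet p u v X) :=
    fun u v hu hv => bdd_sub hu hv hBX
  have hbddY : ∀ u v : ℝ, 0 ≤ u → v ≤ T → BddAbove (rawSet q u v Y) :=
    fun u v hu hv => bdd_sub hu hv hBY
  have hBabX := hbddX a b ha hb
  have hBabY := hbddY a b ha hb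
  have hA0 : 0 ≤ V p a b X := V_nonneg hab hBabX
  have hB0 : 0 ≤ V q a b Y := V_nonneg hab hBabY
  rcases eq_or_lt_of_le hA0 with hA | hA
  · -- X is constant on [a,b]
    have hXconst : ∀ i : ℕ, X (t i) = X a := by
      intro i
      have hm := part_mem ht ht0 htn i
      have h1 : |X (t i) - X a| ≤ V p a (t i) X ^ (1/p) :=
        abs_le_V_rpow hp0 hm.1 (hbddX a (t i) ha (le_trans hm.2 hb))
      have h2 : V p a (t i) X ≤ V p a b X :=
        V_mono le_rfl hm.1 hm.2 hBabX
      have h3 : V p a (t i) X ≤ 0 := by rw [hA]; exact h2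
      have h4 : V p a (t i) X = 0 :=
        le_antisymm h3 (V_nonneg hm.1 (hbddX a (t i) ha (le_trans hm.2 hb)))
      rw [h4, Real.zero_rpow (by positivity : (1:ℝ)/p ≠ 0)] at h1
      have := abs_nonneg (X (t i) - X a)
      have h5 : |X (t i) - X a| = 0 := le_antisymm h1 this
      rw [abs_eq_zero, sub_eq_zero] at h5
      exact h5
    have hsum : ∑ i ∈ Finset.range n, X (t i) * (Y (t (i+1)) - Y (t i))
        = X a * (Y b - Y a) := by
      calc ∑ i ∈ Finset.range n, X (t i) * (Y (t (i+1)) - Y (t i))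
          = ∑ i ∈ Finset.range n, X a * (Y (t (i+1)) - Y (t i)) :=
            Finset.sum_congr rfl fun i _ => by rw [hXconst i]
        _ = X a * ∑ i ∈ Finset.range n, (Y (t (i+1)) - Y (t i)) := by rw [Finset.mul_sum]
        _ = X a * (Y (t n) - Y (t 0)) := by rw [Finset.sum_range_sub (fun i => Y (t i))]
        _ = X a * (Y b - Y a) := by rw [htn n le_rfl, ht0]
    rw [hsum, sub_self, abs_zero, ← hA, Real.zero_rpow (by positivity : (1:ℝ)/p ≠ 0)]
    have : (0:ℝ) ≤ V q a b Y ^ (1/q) := Real.rpow_nonneg hB0 _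
    nlinarith [CC_nonneg θ]
  · rcases eq_or_lt_of_le hB0 with hB | hB
    · -- Y is constant on [a,b]
      have hYconst : ∀ u v : ℝ, a ≤ u → u ≤ v → v ≤ b → Y v = Y u := by
        intro u v hu huv hv
        have h1 : |Y v - Y u| ≤ V q u v Y ^ (1/q) :=
          abs_le_V_rpow hq0 huv (hbddY u v (le_trans ha hu) (le_trans hv hb))
        have h2 : V q u v Y ≤ V q a b Y := V_mono hu huv hv hBabY
        have h3 : V q u v Y = 0 := le_antisymm (hB ▸ h2)
          (V_nonneg huv (hbddY u v (le_trans ha hu) (le_trans hv hb)))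
        rw [h3, Real.zero_rpow (by positivity : (1:ℝ)/q ≠ 0)] at h1
        have h5 : |Y v - Y u| = 0 := le_antisymm h1 (abs_nonneg _)
        rw [abs_eq_zero, sub_eq_zero] at h5
        exact h5
      have hsum : ∑ i ∈ Finset.range n, X (t i) * (Y (t (i+1)) - Y (t i)) = 0 := by
        apply Finset.sum_eq_zero
        intro i _
        have hm := part_mem ht ht0 htn i
        have hm' := part_mem ht ht0 htn (i+1)
        rw [hYconst (t i) (t (i+1)) hm.1 (ht (Nat.le_succ i)) hm'.2, sub_self, mul_zero]
      have hE : Y b = Y a := hYconst a b le_rfl hab le_rfl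
      rw [hsum, hE, sub_self, mul_zero, sub_zero, abs_zero, ← hB,
        Real.zero_rpow (by positivity : (1:ℝ)/q ≠ 0), mul_zero]
    · -- main case
      set A0 := V p a b X with hA0def
      set B0 := V q a b Y with hB0def
      set ω : ℝ → ℝ → ℝ := fun u v => V p u v X / A0 + V q u v Y / B0 with hωdef
      have hω0 : ∀ u v, a ≤ u → u ≤ v → v ≤ b → 0 ≤ ω u v := by
        intro u v hu huv hv
        have h1 := V_nonneg huv (hbddX u v (le_trans ha hu) (le_trans hv hb))
        have h2 := V_nonneg huv (hbddY u v (le_trans ha hu) (le_trans hv hb))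
        positivity
      have hωadd : ∀ u v w, a ≤ u → u ≤ v → v ≤ w → w ≤ b → ω u v + ω v w ≤ ω u w := by
        intro u v w hu huv hvw hw
        have h1 : V p u v X + V p v w X ≤ V p u w X :=
          V_superadd huv hvw (hbddX u w (le_trans ha hu) (le_trans hw hb))
        have h2 : V q u v Y + V q v w Y ≤ V q u w Y :=
          V_superadd huv hvw (hbddY u w (le_trans ha hu) (le_trans hw hb))
        have e : ω u v + ω v w = (V p u v X + V p v w X)/A0 + (V q u v Y + V q v w Y)/B0 := by
          simp only [hωdef]; ring
        have e2 : ω u w = V p u w X / A0 + V q u w Y / B0 := rfl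
        rw [e, e2]
        gcongr
      have hωab : ω a b = 2 := by
        have e : ω a b = V p a b X / A0 + V q a b Y / B0 := rfl
        rw [e, ← hA0def, ← hB0def, div_self (ne_of_gt hA), div_self (ne_of_gt hB)]
        norm_num
      have hABnn : 0 ≤ A0 ^ (1/p) * B0 ^ (1/q) :=
        mul_nonneg (Real.rpow_nonneg hA0 _) (Real.rpow_nonneg hB0 _)
      have hXY : ∀ u v w, a ≤ u → u ≤ v → v ≤ w → w ≤ b →
          |X v - X u| * |Y w - Y v| ≤ (A0 ^ (1/p) * B0 ^ (1/q)) * ω u w ^ θ := by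
        intro u v w hu huv hvw hw
        have huw : u ≤ w := huv.trans hvw
        have h0u : (0:ℝ) ≤ u := le_trans ha hu
        have hwT : w ≤ T := le_trans hw hb
        have h0uw : 0 ≤ ω u w := hω0 u w hu huw hw
        have hωX : V p u w X ≤ A0 * ω u w := by
          have h2 : 0 ≤ V q u w Y / B0 :=
            div_nonneg (V_nonneg huw (hbddY u w h0u hwT)) hB.le
          have h3 : V p u w X / A0 ≤ ω u w := by
            have e2 : ω u w = V p u w X / A0 + V q u w Y / B0 := rfl
            rw [e2]; linarith
          calc V p u w X = A0 * (V p u w X / A0) := by field_simp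
            _ ≤ A0 * ω u w := mul_le_mul_of_nonneg_left h3 hA.le
        have hωY : V q u w Y ≤ B0 * ω u w := by
          have h2 : 0 ≤ V p u w X / A0 :=
            div_nonneg (V_nonneg huw (hbddX u w h0u hwT)) hA.le
          have h3 : V q u w Y / B0 ≤ ω u w := by
            have e2 : ω u w = V p u w X / A0 + V q u w Y / B0 := rfl
            rw [e2]; linarith
          calc V q u w Y = B0 * (V q u w Y / B0) := by field_simp
            _ ≤ B0 * ω u w := mul_le_mul_of_nonneg_left h3 hB.le
        have hX1 : |X v - X u| ≤ (A0 * ω u w) ^ (1/p) := by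
          refine le_trans (abs_le_V_rpow hp0 huv (hbddX u v h0u (le_trans (hvw.trans hw) hb))) ?_
          refine Real.rpow_le_rpow (V_nonneg huv (hbddX u v h0u (le_trans (hvw.trans hw) hb)))
            ?_ (by positivity)
          exact le_trans (V_mono le_rfl huv hvw (hbddX u w h0u hwT)) hωX
        have hY1 : |Y w - Y v| ≤ (B0 * ω u w) ^ (1/q) := by
          refine le_trans (abs_le_V_rpow hq0 hvw (hbddY v w (le_trans h0u huv) hwT)) ?_
          refine Real.rpow_le_rpow (V_nonneg hvw (hbddY v w (le_trans h0u huv) hwT))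
            ?_ (by positivity)
          refine le_trans ?_ hωY
          exact V_mono huv hvw le_rfl (hbddY u w h0u hwT)
        calc |X v - X u| * |Y w - Y v|
            ≤ (A0 * ω u w) ^ (1/p) * (B0 * ω u w) ^ (1/q) :=
              mul_le_mul hX1 hY1 (abs_nonneg _) (Real.rpow_nonneg (by positivity) _)
          _ = (A0 ^ (1/p) * B0 ^ (1/q)) * ω u w ^ θ := by
              rw [Real.mul_rpow hA.le h0uw, Real.mul_rpow hB.le h0uw, hθdef,
                Real.rpow_add' h0uw (by positivity)]
              ring
      have habs := young_loeve_abstract hθ1 hABnn hω0 hωadd hXY n t ht ht0 htn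
      calc |(∑ i ∈ Finset.range n, X (t i) * (Y (t (i+1)) - Y (t i))) - X a * (Y b - Y a)|
          ≤ (A0 ^ (1/p) * B0 ^ (1/q)) * ∑ k ∈ Finset.range (n-1), (2 * ω a b / ((k:ℝ)+1)) ^ θ :=
            habs
        _ ≤ (A0 ^ (1/p) * B0 ^ (1/q)) * CC θ := by
            apply mul_le_mul_of_nonneg_left _ hABnn
            have e : ∀ k : ℕ, (2 * ω a b / ((k:ℝ)+1)) ^ θ = (4 / ((k:ℝ)+1)) ^ θ := by
              intro k; rw [hωab]; norm_num
            calc ∑ k ∈ Finset.range (n-1), (2 * ω a b / ((k:ℝ)+1)) ^ θ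
                = ∑ k ∈ Finset.range (n-1), (4 / ((k:ℝ)+1)) ^ θ :=
                  Finset.sum_congr rfl fun k _ => e k
              _ ≤ CC θ := sum_le_CC hθ1 _
        _ = CC θ * V p a b X ^ (1/p) * V q a b Y ^ (1/q) := by
            rw [← hA0def, ← hB0def]; ring

end YoungAux
namespace YoungAux

lemma exists_fine_partition {a b δ : ℝ} (hab : a ≤ b) (hδ : 0 < δ) :
    ∃ (n : ℕ) (t : ℕ → ℝ), Monotone t ∧ t 0 = a ∧ (∀ i ≥ n, t i = b) ∧
      ∀ i, t (i+1) - t i < δ := by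
  refine ⟨⌈(b - a) / (δ/2)⌉₊, fun i => min (a + i * (δ/2)) b, ?_, ?_, ?_, ?_⟩
  · intro i j hij
    apply min_le_min _ le_rfl
    have h : (i:ℝ) ≤ j := Nat.cast_le.mpr hij
    nlinarith
  · simp [min_eq_left hab]
  · intro i hi
    apply min_eq_right
    have h1 : (b - a)/(δ/2) ≤ (⌈(b-a)/(δ/2)⌉₊ : ℝ) := Nat.le_ceil _
    have h2 : ((⌈(b-a)/(δ/2)⌉₊ : ℕ) : ℝ) ≤ i := Nat.cast_le.mpr hi
    rw [div_le_iff₀ (by linarith : (0:ℝ) < δ/2)] at h1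
    nlinarith
  · intro i
    have h1 : min (a + (i+1 : ℕ) * (δ/2)) b ≤ a + ((i:ℝ)+1)*(δ/2) := by
      push_cast
      exact min_le_left _ _
    rcases min_cases (a + (i:ℝ) * (δ/2)) b with ⟨h2, -⟩ | ⟨h2, -⟩
    · have e : (fun i : ℕ => min (a + (i:ℝ) * (δ/2)) b) i = a + (i:ℝ)*(δ/2) := h2
      simp only [e]
      push_cast at h1 ⊢
      nlinarith
    · have e : (fun i : ℕ => min (a + (i:ℝ) * (δ/2)) b) i = b := h2
      simp only [e]
      have h3 : min (a + ((i+1:ℕ):ℝ) * (δ/2)) b ≤ b := min_le_right _ _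
      push_cast at h3 ⊢
      linarith

lemma increment_bound {p q : ℝ} (hp : 1 ≤ p) (hq : 1 ≤ q) (hpq : 1 < 1/p + 1/q)
    {T : ℝ} {X Y I : ℝ → ℝ} (hBX : BddAbove (rawSet p 0 T X)) (hBY : BddAbove (rawSet q 0 T Y))
    (hI : ∀ t ∈ Set.Icc (0:ℝ) T, IsYoungIntegral 0 t X Y (I t))
    {a b : ℝ} (ha : 0 ≤ a) (hab : a ≤ b) (hb : b ≤ T) :
    |I b - I a| ≤ (|X a| + CC (1/p+1/q) * V p a b X ^ (1/p)) * V q a b Y ^ (1/q) := by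
  have hq0 : 0 < q := lt_of_lt_of_le one_pos hq
  apply le_of_forall_pos_le_add
  intro ε hε
  obtain ⟨δ1, hδ1, hP1⟩ := hI b ⟨le_trans ha hab, hb⟩ (ε/2) (by linarith)
  obtain ⟨δ2, hδ2, hP2⟩ := hI a ⟨ha, le_trans hab hb⟩ (ε/2) (by linarith)
  have hδ : 0 < min δ1 δ2 := lt_min hδ1 hδ2
  obtain ⟨ns, s, hs, hs0, hsn, hsmesh⟩ := exists_fine_partition ha hδ
  obtain ⟨nu, u, hu, hu0, hun, humesh⟩ := exists_fine_partition hab hδ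
  obtain ⟨w, hw, hw0, hwn, hwsum, hwmesh⟩ := concat hs hs0 hsn hu hu0 hun
  have h1 : |(∑ i ∈ Finset.range (ns+nu), X (w i) * (Y (w (i+1)) - Y (w i))) - I b| < ε/2 :=
    hP1 (ns+nu) w hw hw0 hwn (fun i hi => lt_of_lt_of_le
      (hwmesh (min δ1 δ2) (fun j _ => hsmesh j) (fun j _ => humesh j) i hi) (min_le_left _ _))
  have h2 : |(∑ i ∈ Finset.range ns, X (s i) * (Y (s (i+1)) - Y (s i))) - I a| < ε/2 :=
    hP2 ns s hs hs0 hsn (fun i _ => lt_of_lt_of_le (hsmesh i) (min_le_right _ _))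
  have h3 := young_loeve hp hq hpq hBX hBY ha hab hb hu hu0 hun
  have hsplit := hwsum (fun x y => X x * (Y y - Y x))
  set RSw := ∑ i ∈ Finset.range (ns+nu), X (w i) * (Y (w (i+1)) - Y (w i)) with hRSw
  set RSs := ∑ i ∈ Finset.range ns, X (s i) * (Y (s (i+1)) - Y (s i)) with hRSs
  set RSu := ∑ i ∈ Finset.range nu, X (u i) * (Y (u (i+1)) - Y (u i)) with hRSu
  set E := X a * (Y b - Y a) with hE
  have key : I b - I a = (I b - RSw) + ((RSs - I a) + ((RSu - E) + E)) := by
    linear_combination hsplit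
  have habs : |I b - I a| ≤ |I b - RSw| + (|RSs - I a| + (|RSu - E| + |E|)) := by
    rw [key]
    exact (abs_add_le _ _).trans (add_le_add le_rfl ((abs_add_le _ _).trans
      (add_le_add le_rfl (abs_add_le _ _))))
  have h4 : |E| ≤ |X a| * V q a b Y ^ (1/q) := by
    rw [hE, abs_mul]
    exact mul_le_mul_of_nonneg_left (abs_le_V_rpow hq0 hab (bdd_sub ha hb hBY)) (abs_nonneg _)
  have h5 : |I b - RSw| = |RSw - I b| := abs_sub_comm _ _
  have hVq0 : 0 ≤ V q a b Y ^ (1/q) :=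
    Real.rpow_nonneg (V_nonneg hab (bdd_sub ha hb hBY)) _
  rw [h5] at habs
  have hgoal : (|X a| + CC (1/p+1/q) * V p a b X ^ (1/p)) * V q a b Y ^ (1/q)
      = |X a| * V q a b Y ^ (1/q) + CC (1/p+1/q) * V p a b X ^ (1/p) * V q a b Y ^ (1/q) := by
    ring
  rw [hgoal]
  linarith

lemma pVarSet_elem_nonneg {p a b : ℝ} {X : ℝ → ℝ} {v : ℝ} (hv : v ∈ pVarSet p a b X) :
    0 ≤ v := by
  obtain ⟨n, t, _, _, _, rfl⟩ := hv
  exact Real.rpow_nonneg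
    (Finset.sum_nonneg fun i _ => Real.rpow_nonneg (abs_nonneg _) _) _

lemma pVarSet_nonempty {p a b : ℝ} (X : ℝ → ℝ) (hab : a ≤ b) : (pVarSet p a b X).Nonempty :=
  ⟨_, 1, stepF a b, stepF_mono hab, stepF_zero a b, stepF_pos a b, rfl⟩

lemma mem_pVarSet_of_raw {p a b : ℝ} {X : ℝ → ℝ} {x : ℝ} (hx : x ∈ rawSet p a b X) :
    x ^ (1/p) ∈ pVarSet p a b X := by
  obtain ⟨n, t, h1, h2, h3, rfl⟩ := hx
  exact ⟨n, t, h1, h2, h3, rfl⟩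

lemma raw_of_mem_pVarSet {p a b : ℝ} {X : ℝ → ℝ} {v : ℝ} (hv : v ∈ pVarSet p a b X) :
    ∃ x ∈ rawSet p a b X, v = x ^ (1/p) := by
  obtain ⟨n, t, h1, h2, h3, rfl⟩ := hv
  exact ⟨_, ⟨n, t, h1, h2, h3, rfl⟩, rfl⟩

lemma bddAbove_raw_of {p a b : ℝ} {X : ℝ → ℝ} (hp : 0 < p) (hab : a ≤ b)
    (h : BddAbove (pVarSet p a b X)) : BddAbove (rawSet p a b X) := by
  obtain ⟨K, hK⟩ := h
  have hK0 : 0 ≤ K :=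
    le_trans (pVarSet_elem_nonneg (pVarSet_nonempty X hab).choose_spec)
      (hK (pVarSet_nonempty X hab).choose_spec)
  refine ⟨K ^ p, fun x hx => ?_⟩
  have h1 : x ^ (1/p) ≤ K := hK (mem_pVarSet_of_raw hx)
  have h2 := Real.rpow_le_rpow (Real.rpow_nonneg (rawSet_nonneg hx) _) h1 hp.le
  rwa [one_div, Real.rpow_inv_rpow (rawSet_nonneg hx) hp.ne'] at h2

lemma pVar_eq_V {p a b : ℝ} {X : ℝ → ℝ} (hp : 0 < p) (hab : a ≤ b)
    (h : BddAbove (pVarSet p a b X)) : pVar p a b X = V p a b X ^ (1/p) := by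
  have hraw := bddAbove_raw_of hp hab h
  apply le_antisymm
  · apply csSup_le (pVarSet_nonempty X hab)
    intro v hv
    obtain ⟨x, hx, rfl⟩ := raw_of_mem_pVarSet hv
    exact Real.rpow_le_rpow (rawSet_nonneg hx) (le_csSup hraw hx) (by positivity)
  · have hmem := mem_pVarSet_of_raw (p := p) (singleton_mem (p := p) X hab)
    have hP0 : 0 ≤ pVar p a b X :=
      le_trans (pVarSet_elem_nonneg hmem) (le_csSup h hmem)
    have hV : V p a b X ≤ pVar p a b X ^ p := by
      apply csSup_le (rawSet_nonempty X hab)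
      intro x hx
      have h1 : x ^ (1/p) ≤ pVar p a b X := le_csSup h (mem_pVarSet_of_raw hx)
      have h2 := Real.rpow_le_rpow (Real.rpow_nonneg (rawSet_nonneg hx) _) h1 hp.le
      rwa [one_div, Real.rpow_inv_rpow (rawSet_nonneg hx) hp.ne'] at h2
    have h3 := Real.rpow_le_rpow (V_nonneg hab hraw) hV (by positivity : (0:ℝ) ≤ 1/p)
    rw [one_div]
    rw [one_div, Real.rpow_rpow_inv hP0 hp.ne'] at h3
    exact h3

end YoungAux

open YoungAux in
/-- the Young estimate, with a constant depending only on `p` and `q`. -/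
theorem young_estimate (p q : ℝ) (hp : 1 ≤ p) (hq : 1 ≤ q) (hpq : 1 / p + 1 / q > 1) :
    ∃ c > (0 : ℝ), ∀ (T : ℝ), 0 < T → ∀ (X Y I : ℝ → ℝ),
      ContinuousOn X (Set.Icc 0 T) → ContinuousOn Y (Set.Icc 0 T) →
      HasFinitePVar p 0 T X → HasFinitePVar q 0 T Y →
      (∀ t ∈ Set.Icc (0 : ℝ) T, IsYoungIntegral 0 t X Y (I t)) →
      pVar q 0 T I ≤ c * (|X 0| + pVar p 0 T X) * pVar q 0 T Y := by
  have hp0 : 0 < p := lt_of_lt_of_le one_pos hp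
  have hq0 : 0 < q := lt_of_lt_of_le one_pos hq
  refine ⟨1 + CC (1/p + 1/q), by linarith [CC_nonneg (1/p + 1/q)], ?_⟩
  intro T hT X Y I _ _ hFX hFY hI
  have hT0 : (0:ℝ) ≤ T := hT.le
  have hBX : BddAbove (rawSet p 0 T X) := bddAbove_raw_of hp0 hT0 hFX
  have hBY : BddAbove (rawSet q 0 T Y) := bddAbove_raw_of hq0 hT0 hFY
  set C := CC (1/p + 1/q) with hC
  have hC0 : 0 ≤ C := CC_nonneg _
  set M := (1 + C) * (|X 0| + V p 0 T X ^ (1/p)) with hM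
  have hVX0 : 0 ≤ V p 0 T X ^ (1/p) := Real.rpow_nonneg (V_nonneg hT0 hBX) _
  have hM0 : 0 ≤ M := by
    rw [hM]
    have := abs_nonneg (X 0)
    nlinarith
  -- increment bound
  have hInc : ∀ u v : ℝ, 0 ≤ u → u ≤ v → v ≤ T → |I v - I u| ≤ M * V q u v Y ^ (1/q) := by
    intro u v hu huv hv
    have h1 := increment_bound hp hq hpq hBX hBY hI hu huv hv
    refine h1.trans ?_
    apply mul_le_mul_of_nonneg_right _
      (Real.rpow_nonneg (V_nonneg huv (bdd_sub hu hv hBY)) _)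
    have h2 : |X u| ≤ |X 0| + V p 0 u X ^ (1/p) := by
      have h2a : |X u - X 0| ≤ V p 0 u X ^ (1/p) :=
        abs_le_V_rpow hp0 hu (bdd_sub le_rfl (le_trans huv hv) hBX)
      have h2b : X u = X 0 + (X u - X 0) := by ring
      calc |X u| = |X 0 + (X u - X 0)| := by rw [← h2b]
        _ ≤ |X 0| + |X u - X 0| := abs_add_le _ _
        _ ≤ |X 0| + V p 0 u X ^ (1/p) := by linarith
    have h3 : V p 0 u X ^ (1/p) ≤ V p 0 T X ^ (1/p) :=
      Real.rpow_le_rpow (V_nonneg hu (bdd_sub le_rfl (le_trans huv hv) hBX))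
        (V_mono le_rfl hu (le_trans huv hv) hBX) (by positivity)
    have h4 : V p u v X ^ (1/p) ≤ V p 0 T X ^ (1/p) :=
      Real.rpow_le_rpow (V_nonneg huv (bdd_sub hu hv hBX))
        (V_mono hu huv hv hBX) (by positivity)
    have h5 : 0 ≤ |X 0| := abs_nonneg _
    rw [hM]
    nlinarith
  -- bound each element of the q-variation set of I
  have hω0T : ∀ u v : ℝ, 0 ≤ u → u ≤ v → v ≤ T → 0 ≤ V q u v Y :=
    fun u v hu huv hv => V_nonneg huv (bdd_sub hu hv hBY)
  have hωaddT : ∀ u v w : ℝ, 0 ≤ u → u ≤ v → v ≤ w → w ≤ T →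
      V q u v Y + V q v w Y ≤ V q u w Y :=
    fun u v w hu huv hvw hw => V_superadd huv hvw (bdd_sub hu hw hBY)
  have hub : ∀ v ∈ pVarSet q 0 T I, v ≤ M * V q 0 T Y ^ (1/q) := by
    intro v hv
    obtain ⟨n, t, ht, ht0, htn, rfl⟩ := hv
    have hterm : ∀ i : ℕ, |I (t (i+1)) - I (t i)| ^ q ≤ M ^ q * V q (t i) (t (i+1)) Y := by
      intro i
      have hm := part_mem ht ht0 htn i
      have hm' := part_mem ht ht0 htn (i+1)
      have h1 := hInc (t i) (t (i+1)) hm.1 (ht (Nat.le_succ i)) hm'.2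
      have hVl : 0 ≤ V q (t i) (t (i+1)) Y :=
        V_nonneg (ht (Nat.le_succ i)) (bdd_sub hm.1 hm'.2 hBY)
      have h2 := Real.rpow_le_rpow (abs_nonneg _) h1 hq0.le
      rwa [Real.mul_rpow hM0 (Real.rpow_nonneg hVl _), one_div,
        Real.rpow_inv_rpow hVl hq0.ne'] at h2
    have hchain : ∑ i ∈ Finset.range n, V q (t i) (t (i+1)) Y ≤ V q 0 T Y :=
      chain_le hω0T hωaddT t ht (fun j => part_mem ht ht0 htn j) n
    have hsum : ∑ i ∈ Finset.range n, |I (t (i+1)) - I (t i)| ^ q ≤ M ^ q * V q 0 T Y := by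
      calc ∑ i ∈ Finset.range n, |I (t (i+1)) - I (t i)| ^ q
          ≤ ∑ i ∈ Finset.range n, M ^ q * V q (t i) (t (i+1)) Y :=
            Finset.sum_le_sum fun i _ => hterm i
        _ = M ^ q * ∑ i ∈ Finset.range n, V q (t i) (t (i+1)) Y := by rw [Finset.mul_sum]
        _ ≤ M ^ q * V q 0 T Y :=
            mul_le_mul_of_nonneg_left hchain (Real.rpow_nonneg hM0 _)
    have h5 := Real.rpow_le_rpow
      (Finset.sum_nonneg fun i _ => Real.rpow_nonneg (abs_nonneg _) _) hsum
      (by positivity : (0:ℝ) ≤ 1/q)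
    calc (∑ i ∈ Finset.range n, |I (t (i+1)) - I (t i)| ^ q) ^ (1/q)
        ≤ (M ^ q * V q 0 T Y) ^ (1/q) := h5
      _ = M * V q 0 T Y ^ (1/q) := by
          rw [Real.mul_rpow (Real.rpow_nonneg hM0 _) (V_nonneg hT0 hBY), one_div,
            Real.rpow_rpow_inv hM0 hq0.ne', ← one_div]
  have hfinal : pVar q 0 T I ≤ M * V q 0 T Y ^ (1/q) :=
    csSup_le (pVarSet_nonempty I hT0) hub
  rw [pVar_eq_V hp0 hT0 hFX, pVar_eq_V hq0 hT0 hFY]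
  calc pVar q 0 T I ≤ M * V q 0 T Y ^ (1/q) := hfinal
    _ = (1 + C) * (|X 0| + V p 0 T X ^ (1/p)) * V q 0 T Y ^ (1/q) := by rw [hM]
end
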